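/- arXiv:1411.5060 — 10 statements merged into one kernel-verified Lean document; each statement's English description precedes it below -/
import Mathlib

section
/- Let (A_1, A_2, A_3) be a 3-player finite game all of whose payoff entries lie in the interval [0,1]. Then a vector z = (z_{ps}) is a Nash equilibrium of the game satisfying z_{ps} ≤ 1/2 for all p and s if and only if there exist β and δ such that (z, β, δ) is a solution of the system obtained from F_NE(A) by replacing the upper bound z_{ps} ≤ 1 with z_{ps} ≤ 1/2 for all p and s. -/
open Finset

/-- A mixed strategy over a finite strategy set: nonnegative and summing to one. -/
def IsMixed {S : Type*} [Fintype S] (z : S → ℝ) : Prop :=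
  (∀ s, 0 ≤ z s) ∧ ∑ s, z s = 1

/-- Expected payoff `π_p(z)` of a player with payoff tensor `A` under the
mixed-strategy profile `(z1, z2, z3)`. -/
noncomputable def expPay {S1 S2 S3 : Type*} [Fintype S1] [Fintype S2] [Fintype S3]
    (A : S1 → S2 → S3 → ℝ) (z1 : S1 → ℝ) (z2 : S2 → ℝ) (z3 : S3 → ℝ) : ℝ :=
  ∑ s1, ∑ s2, ∑ s3, A s1 s2 s3 * z1 s1 * z2 s2 * z3 s3

/-- `π_1(s, z_{-1})`: payoff to player 1 from pure strategy `s` against `(z2, z3)`. -/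
noncomputable def purePay1 {S1 S2 S3 : Type*} [Fintype S2] [Fintype S3]
    (A : S1 → S2 → S3 → ℝ) (s : S1) (z2 : S2 → ℝ) (z3 : S3 → ℝ) : ℝ :=
  ∑ s2, ∑ s3, A s s2 s3 * z2 s2 * z3 s3

/-- `π_2(s, z_{-2})`: payoff to player 2 from pure strategy `s` against `(z1, z3)`. -/
noncomputable def purePay2 {S1 S2 S3 : Type*} [Fintype S1] [Fintype S3]
    (A : S1 → S2 → S3 → ℝ) (s : S2) (z1 : S1 → ℝ) (z3 : S3 → ℝ) : ℝ :=
  ∑ s1, ∑ s3, A s1 s s3 * z1 s1 * z3 s3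

/-- `π_3(s, z_{-3})`: payoff to player 3 from pure strategy `s` against `(z1, z2)`. -/
noncomputable def purePay3 {S1 S2 S3 : Type*} [Fintype S1] [Fintype S2]
    (A : S1 → S2 → S3 → ℝ) (s : S3) (z1 : S1 → ℝ) (z2 : S2 → ℝ) : ℝ :=
  ∑ s1, ∑ s2, A s1 s2 s * z1 s1 * z2 s2

/-- Nash equilibrium of the 3-player game `(A1, A2, A3)`: a mixed profile from
which no player can unilaterally deviate profitably. -/
def IsNash {S1 S2 S3 : Type*} [Fintype S1] [Fintype S2] [Fintype S3]
    (A1 A2 A3 : S1 → S2 → S3 → ℝ) (z1 : S1 → ℝ) (z2 : S2 → ℝ) (z3 : S3 → ℝ) : Prop :=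
  IsMixed z1 ∧ IsMixed z2 ∧ IsMixed z3 ∧
  (∀ w1 : S1 → ℝ, IsMixed w1 → expPay A1 w1 z2 z3 ≤ expPay A1 z1 z2 z3) ∧
  (∀ w2 : S2 → ℝ, IsMixed w2 → expPay A2 z1 w2 z3 ≤ expPay A2 z1 z2 z3) ∧
  (∀ w3 : S3 → ℝ, IsMixed w3 → expPay A3 z1 z2 w3 ≤ expPay A3 z1 z2 z3)

section Aux

variable {S1 S2 S3 : Type*} [Fintype S1] [Fintype S2] [Fintype S3]

lemma expPay_eq1 (A : S1 → S2 → S3 → ℝ) (z1 : S1 → ℝ) (z2 : S2 → ℝ) (z3 : S3 → ℝ) :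
    expPay A z1 z2 z3 = ∑ s, z1 s * purePay1 A s z2 z3 := by
  simp only [expPay, purePay1, Finset.mul_sum]
  exact Finset.sum_congr rfl fun s1 _ => Finset.sum_congr rfl fun s2 _ =>
    Finset.sum_congr rfl fun s3 _ => by ring

lemma expPay_eq2 (A : S1 → S2 → S3 → ℝ) (z1 : S1 → ℝ) (z2 : S2 → ℝ) (z3 : S3 → ℝ) :
    expPay A z1 z2 z3 = ∑ s, z2 s * purePay2 A s z1 z3 := by
  simp only [expPay, purePay2, Finset.mul_sum]
  rw [Finset.sum_comm]
  exact Finset.sum_congr rfl fun s2 _ => Finset.sum_congr rfl fun s1 _ =>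
    Finset.sum_congr rfl fun s3 _ => by ring

lemma expPay_eq3 (A : S1 → S2 → S3 → ℝ) (z1 : S1 → ℝ) (z2 : S2 → ℝ) (z3 : S3 → ℝ) :
    expPay A z1 z2 z3 = ∑ s, z3 s * purePay3 A s z1 z2 := by
  simp only [expPay, purePay3, Finset.mul_sum]
  calc (∑ s1, ∑ s2, ∑ s3, A s1 s2 s3 * z1 s1 * z2 s2 * z3 s3)
      = ∑ s1, ∑ s3, ∑ s2, A s1 s2 s3 * z1 s1 * z2 s2 * z3 s3 :=
        Finset.sum_congr rfl fun s1 _ => Finset.sum_comm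
    _ = ∑ s3, ∑ s1, ∑ s2, A s1 s2 s3 * z1 s1 * z2 s2 * z3 s3 := Finset.sum_comm
    _ = ∑ s3, ∑ s1, ∑ s2, z3 s3 * (A s1 s2 s3 * z1 s1 * z2 s2) :=
        Finset.sum_congr rfl fun s3 _ => Finset.sum_congr rfl fun s1 _ =>
          Finset.sum_congr rfl fun s2 _ => by ring

/-- point mass -/
def pt {S : Type*} [DecidableEq S] (s : S) : S → ℝ := fun t => if t = s then 1 else 0

lemma isMixed_pt {S : Type*} [Fintype S] [DecidableEq S] (s : S) : IsMixed (pt s) := by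
  constructor
  · intro t; unfold pt; split <;> norm_num
  · simp [pt]

/-- Generic bilinear bound: if f ∈ [0,1] pointwise and z2, z3 are mixed, then
`∑∑ f * z2 * z3 ∈ [0,1]`. -/
lemma bil_mem {T2 T3 : Type*} [Fintype T2] [Fintype T3]
    (f : T2 → T3 → ℝ) (hf : ∀ a b, f a b ∈ Set.Icc (0:ℝ) 1)
    {z2 : T2 → ℝ} {z3 : T3 → ℝ} (h2 : IsMixed z2) (h3 : IsMixed z3) :
    (∑ a, ∑ b, f a b * z2 a * z3 b) ∈ Set.Icc (0:ℝ) 1 := by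
  constructor
  · apply Finset.sum_nonneg; intro a _
    apply Finset.sum_nonneg; intro b _
    have := (hf a b).1
    have := h2.1 a
    have := h3.1 b
    positivity
  · have hle : (∑ a, ∑ b, f a b * z2 a * z3 b) ≤ ∑ a, ∑ b, z2 a * z3 b := by
      apply Finset.sum_le_sum; intro a _
      apply Finset.sum_le_sum; intro b _
      have h1 := (hf a b).2
      have h2a := h2.1 a
      have h3b := h3.1 b
      nlinarith [mul_nonneg (mul_nonneg (sub_nonneg.2 h1) h2a) h3b]
    have heq : (∑ a, ∑ b, z2 a * z3 b) = 1 := by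
      rw [← Finset.sum_mul_sum, h2.2, h3.2, one_mul]
    linarith

lemma purePay1_mem (A : S1 → S2 → S3 → ℝ) (hA : ∀ s1 s2 s3, A s1 s2 s3 ∈ Set.Icc (0:ℝ) 1)
    (s : S1) {z2 : S2 → ℝ} {z3 : S3 → ℝ} (h2 : IsMixed z2) (h3 : IsMixed z3) :
    purePay1 A s z2 z3 ∈ Set.Icc (0:ℝ) 1 :=
  bil_mem (fun a b => A s a b) (fun a b => hA s a b) h2 h3

lemma purePay2_mem (A : S1 → S2 → S3 → ℝ) (hA : ∀ s1 s2 s3, A s1 s2 s3 ∈ Set.Icc (0:ℝ) 1)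
    (s : S2) {z1 : S1 → ℝ} {z3 : S3 → ℝ} (h1 : IsMixed z1) (h3 : IsMixed z3) :
    purePay2 A s z1 z3 ∈ Set.Icc (0:ℝ) 1 :=
  bil_mem (fun a b => A a s b) (fun a b => hA a s b) h1 h3

lemma purePay3_mem (A : S1 → S2 → S3 → ℝ) (hA : ∀ s1 s2 s3, A s1 s2 s3 ∈ Set.Icc (0:ℝ) 1)
    (s : S3) {z1 : S1 → ℝ} {z2 : S2 → ℝ} (h1 : IsMixed z1) (h2 : IsMixed z2) :
    purePay3 A s z1 z2 ∈ Set.Icc (0:ℝ) 1 :=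
  bil_mem (fun a b => A a b s) (fun a b => hA a b s) h1 h2

/-- Generic single-player argument. Everything is phrased via the "pure payoff"
function `P : S → ℝ` (payoff of each pure strategy of the active player) and the
active player's mixed strategy `z : S → ℝ`, with the expected payoff of any
strategy `w` equal to `∑ s, w s * P s`. -/
lemma player_iff {S : Type*} [Fintype S] (P : S → ℝ) (hP : ∀ s, P s ∈ Set.Icc (0:ℝ) 1)
    (z : S → ℝ) (hz : IsMixed z) :
    (∀ w : S → ℝ, IsMixed w → (∑ s, w s * P s) ≤ ∑ s, z s * P s) ↔
      ∃ (β : S → ℝ) (δ : ℝ), (∀ s, P s + β s = δ ∧ z s * β s = 0) ∧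
        (∀ s, 0 ≤ β s ∧ β s ≤ 1) ∧ 0 ≤ δ ∧ δ ≤ 1 := by
  classical
  constructor
  · intro h
    set δ := ∑ s, z s * P s with hδ
    have hpure : ∀ s : S, P s ≤ δ := by
      intro s
      have := h (pt s) (isMixed_pt s)
      simpa [pt, Finset.sum_ite_eq', ite_mul] using this
    have hδ0 : 0 ≤ δ := by
      apply Finset.sum_nonneg; intro s _
      exact mul_nonneg (hz.1 s) (hP s).1
    have hδ1 : δ ≤ 1 := by
      calc δ ≤ ∑ s, z s * 1 := by
            apply Finset.sum_le_sum; intro s _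
            exact mul_le_mul_of_nonneg_left (hP s).2 (hz.1 s)
        _ = 1 := by simp [hz.2]
    refine ⟨fun s => δ - P s, δ, ?_, ?_, hδ0, hδ1⟩
    · intro s
      refine ⟨by ring, ?_⟩
      have hsum : ∑ s, z s * (δ - P s) = 0 := by
        rw [show (∑ s, z s * (δ - P s)) = (∑ s, z s) * δ - ∑ s, z s * P s by
          rw [Finset.sum_mul]; rw [← Finset.sum_sub_distrib]
          exact Finset.sum_congr rfl fun s _ => by ring]
        rw [hz.2, ← hδ]; ring
      have := (Finset.sum_eq_zero_iff_of_nonneg (fun s _ =>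
        mul_nonneg (hz.1 s) (sub_nonneg.2 (hpure s)))).1 hsum s (Finset.mem_univ s)
      exact this
    · intro s
      refine ⟨show (0:ℝ) ≤ δ - P s from sub_nonneg.2 (hpure s),
        show δ - P s ≤ 1 from ?_⟩
      have := (hP s).1
      linarith
  · rintro ⟨β, δ, hcomp, hβ, hδ0, hδ1⟩ w hw
    have hpure : ∀ s, P s ≤ δ := fun s => by
      have := (hcomp s).1; have := (hβ s).1; linarith
    have hzδ : ∑ s, z s * P s = δ := by
      have : ∀ s, z s * P s = z s * δ := by
        intro s
        have h1 := (hcomp s).1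
        have h2 := (hcomp s).2
        calc z s * P s = z s * δ - z s * β s := by rw [← h1]; ring
          _ = z s * δ := by rw [h2]; ring
      rw [Finset.sum_congr rfl fun s _ => this s, ← Finset.sum_mul, hz.2, one_mul]
    rw [hzδ]
    calc (∑ s, w s * P s) ≤ ∑ s, w s * δ := by
          apply Finset.sum_le_sum; intro s _
          exact mul_le_mul_of_nonneg_left (hpure s) (hw.1 s)
      _ = δ := by rw [← Finset.sum_mul, hw.2, one_mul]

end Aux

/-- For a 3-player game with all payoff entries in `[0,1]`,
`z` is a Nash equilibrium with all probabilities at most `1/2` iff there exist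
`β` and `δ` solving the system `F_NE(A)` with the upper bound on the
`z`-variables replaced by `1/2`. -/
theorem nash_half_iff_FNE_half {S1 S2 S3 : Type*} [Fintype S1] [Fintype S2] [Fintype S3]
    (A1 A2 A3 : S1 → S2 → S3 → ℝ)
    (hA1 : ∀ s1 s2 s3, A1 s1 s2 s3 ∈ Set.Icc (0:ℝ) 1)
    (hA2 : ∀ s1 s2 s3, A2 s1 s2 s3 ∈ Set.Icc (0:ℝ) 1)
    (hA3 : ∀ s1 s2 s3, A3 s1 s2 s3 ∈ Set.Icc (0:ℝ) 1)
    (z1 : S1 → ℝ) (z2 : S2 → ℝ) (z3 : S3 → ℝ) :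
    (IsNash A1 A2 A3 z1 z2 z3 ∧
        (∀ s, z1 s ≤ 1/2) ∧ (∀ s, z2 s ≤ 1/2) ∧ (∀ s, z3 s ≤ 1/2)) ↔
      ∃ (β1 : S1 → ℝ) (β2 : S2 → ℝ) (β3 : S3 → ℝ) (δ1 δ2 δ3 : ℝ),
        (∑ s, z1 s = 1) ∧ (∑ s, z2 s = 1) ∧ (∑ s, z3 s = 1) ∧
        (∀ s, purePay1 A1 s z2 z3 + β1 s = δ1 ∧ z1 s * β1 s = 0) ∧
        (∀ s, purePay2 A2 s z1 z3 + β2 s = δ2 ∧ z2 s * β2 s = 0) ∧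
        (∀ s, purePay3 A3 s z1 z2 + β3 s = δ3 ∧ z3 s * β3 s = 0) ∧
        (∀ s, 0 ≤ z1 s ∧ z1 s ≤ 1/2 ∧ 0 ≤ β1 s ∧ β1 s ≤ 1) ∧
        (∀ s, 0 ≤ z2 s ∧ z2 s ≤ 1/2 ∧ 0 ≤ β2 s ∧ β2 s ≤ 1) ∧
        (∀ s, 0 ≤ z3 s ∧ z3 s ≤ 1/2 ∧ 0 ≤ β3 s ∧ β3 s ≤ 1) ∧
        (0 ≤ δ1 ∧ δ1 ≤ 1) ∧ (0 ≤ δ2 ∧ δ2 ≤ 1) ∧ (0 ≤ δ3 ∧ δ3 ≤ 1) := by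
  constructor
  · rintro ⟨⟨hm1, hm2, hm3, hN1, hN2, hN3⟩, hb1, hb2, hb3⟩
    have h1 := (player_iff (fun s => purePay1 A1 s z2 z3)
        (fun s => purePay1_mem A1 hA1 s hm2 hm3) z1 hm1).1 (by
      intro w hw
      have := hN1 w hw
      rwa [expPay_eq1, expPay_eq1 A1 z1] at this)
    have h2 := (player_iff (fun s => purePay2 A2 s z1 z3)
        (fun s => purePay2_mem A2 hA2 s hm1 hm3) z2 hm2).1 (by
      intro w hw
      have := hN2 w hw
      rwa [expPay_eq2, expPay_eq2 A2 z1] at this)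
    have h3 := (player_iff (fun s => purePay3 A3 s z1 z2)
        (fun s => purePay3_mem A3 hA3 s hm1 hm2) z3 hm3).1 (by
      intro w hw
      have := hN3 w hw
      rwa [expPay_eq3, expPay_eq3 A3 z1] at this)
    obtain ⟨β1, δ1, hc1, hβ1, hδ1⟩ := h1
    obtain ⟨β2, δ2, hc2, hβ2, hδ2⟩ := h2
    obtain ⟨β3, δ3, hc3, hβ3, hδ3⟩ := h3
    exact ⟨β1, β2, β3, δ1, δ2, δ3, hm1.2, hm2.2, hm3.2, hc1, hc2, hc3,
      fun s => ⟨hm1.1 s, hb1 s, (hβ1 s).1, (hβ1 s).2⟩,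
      fun s => ⟨hm2.1 s, hb2 s, (hβ2 s).1, (hβ2 s).2⟩,
      fun s => ⟨hm3.1 s, hb3 s, (hβ3 s).1, (hβ3 s).2⟩,
      hδ1, hδ2, hδ3⟩
  · rintro ⟨β1, β2, β3, δ1, δ2, δ3, hs1, hs2, hs3, hc1, hc2, hc3, hz1, hz2, hz3,
      hδ1, hδ2, hδ3⟩
    have hm1 : IsMixed z1 := ⟨fun s => (hz1 s).1, hs1⟩
    have hm2 : IsMixed z2 := ⟨fun s => (hz2 s).1, hs2⟩
    have hm3 : IsMixed z3 := ⟨fun s => (hz3 s).1, hs3⟩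
    refine ⟨⟨hm1, hm2, hm3, ?_, ?_, ?_⟩,
      fun s => (hz1 s).2.1, fun s => (hz2 s).2.1, fun s => (hz3 s).2.1⟩
    · intro w hw
      rw [expPay_eq1, expPay_eq1 A1 z1]
      exact (player_iff (fun s => purePay1 A1 s z2 z3)
        (fun s => purePay1_mem A1 hA1 s hm2 hm3) z1 hm1).2
        ⟨β1, δ1, hc1, fun s => ⟨(hz1 s).2.2.1, (hz1 s).2.2.2⟩, hδ1.1, hδ1.2⟩ w hw
    · intro w hw
      rw [expPay_eq2, expPay_eq2 A2 z1]
      exact (player_iff (fun s => purePay2 A2 s z1 z3)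
        (fun s => purePay2_mem A2 hA2 s hm1 hm3) z2 hm2).2
        ⟨β2, δ2, hc2, fun s => ⟨(hz2 s).2.2.1, (hz2 s).2.2.2⟩, hδ2.1, hδ2.2⟩ w hw
    · intro w hw
      rw [expPay_eq3, expPay_eq3 A3 z1]
      exact (player_iff (fun s => purePay3 A3 s z1 z2)
        (fun s => purePay3_mem A3 hA3 s hm1 hm2) z3 hm3).2
        ⟨β3, δ3, hc3, fun s => ⟨(hz3 s).2.2.1, (hz3 s).2.2.2⟩, hδ3.1, hδ3.2⟩ w hw
end

section
/- Consider any exchange market over a finite set Γ of goods that contains a distinguished good s and an agent A_s whose endowment is exactly one unit of good s (and nothing else) and whose utility function is U(y) = y_s. Then every equilibrium (p, (x_i)) of the market satisfies p_s > 0, and the allocation of agent A_s satisfies x_{A_s, s} = 1. -/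
open Finset

/-- The Leontief utility function with coefficient vector `A`:
`U(y) = min over {j : A j > 0} of y j / A j` (as the infimum of this finite set). -/
noncomputable def leontief {G : Type*} (A : G → ℝ) (y : G → ℝ) : ℝ :=
  sInf {t : ℝ | ∃ j, 0 < A j ∧ t = y j / A j}

/-- `x` is an optimal bundle at prices `p` for an agent with budget `budget`
and utility function `U`. -/
def IsOptimalBundle {G : Type*} [Fintype G] (p : G → ℝ) (budget : ℝ)
    (U : (G → ℝ) → ℝ) (x : G → ℝ) : Prop :=
  (∀ j, 0 ≤ x j) ∧ (∑ j, p j * x j ≤ budget) ∧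
    ∀ y : G → ℝ, (∀ j, 0 ≤ y j) → (∑ j, p j * y j ≤ budget) → U y ≤ U x

/-- Equilibrium of an exchange market given by endowments `W` and utilities `U`:
prices are nonnegative, every agent gets an optimal affordable bundle, no good
is over-demanded, and positively priced goods clear exactly. -/
def IsEquilibrium {ι G : Type*} [Fintype ι] [Fintype G]
    (W : ι → G → ℝ) (U : ι → (G → ℝ) → ℝ) (p : G → ℝ) (x : ι → G → ℝ) : Prop :=
  (∀ j, 0 ≤ p j) ∧
  (∀ i, IsOptimalBundle p (∑ j, p j * W i j) (U i) (x i)) ∧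
  (∀ j, ∑ i, x i j ≤ ∑ i, W i j) ∧
  (∀ j, 0 < p j → ∑ i, x i j = ∑ i, W i j)

/-- Good `r` is exclusive to the set `S` of agents: every agent outside `S` has
no endowment of `r` and a utility function not depending on the `r`-coordinate. -/
def ExclusiveGood {ι G : Type*} (W : ι → G → ℝ) (U : ι → (G → ℝ) → ℝ)
    (r : G) (S : Set ι) : Prop :=
  ∀ i ∉ S, W i r = 0 ∧ ∀ y y' : G → ℝ, (∀ j, j ≠ r → y j = y' j) → U i y = U i y'

/-- In any exchange market containing a distinguished good `s`
and an agent `As` endowed with exactly one unit of `s` and utility `y ↦ y s`,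
every equilibrium has `p s > 0` and `x As s = 1`. -/
theorem numeraire_agent {ι G : Type*} [Fintype ι] [Fintype G] [DecidableEq G]
    (W : ι → G → ℝ) (U : ι → (G → ℝ) → ℝ) (hW : ∀ i j, 0 ≤ W i j)
    (As : ι) (s : G)
    (hWs : W As = fun j => if j = s then 1 else 0)
    (hUs : U As = fun y => y s)
    (p : G → ℝ) (x : ι → G → ℝ)
    (h : IsEquilibrium W U p x) :
    0 < p s ∧ x As s = 1 := by
  obtain ⟨hp, hopt, hle, heq⟩ := h
  obtain ⟨hx0, hbud, hmax⟩ := hopt As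
  have hbudget : ∑ j, p j * W As j = p s := by
    rw [hWs]
    simp [mul_ite]
  rw [hbudget] at hbud hmax
  rw [hUs] at hmax
  -- p s > 0
  have hps : 0 < p s := by
    by_contra hps
    have hps0 : p s = 0 := le_antisymm (not_lt.mp hps) (hp s)
    have := hmax (fun j => x As j + if j = s then 1 else 0)
      (fun j => by have := hx0 j; positivity)
      (by
        have : ∑ j, p j * (x As j + if j = s then 1 else 0)
            = (∑ j, p j * x As j) + p s := by
          simp [mul_add, Finset.sum_add_distrib, mul_ite]
        rw [this, hps0, add_zero]
        simpa [hps0] using hbud)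
    simp at this
    linarith
  refine ⟨hps, ?_⟩
  -- x As s ≤ 1
  have h1 : p s * x As s ≤ ∑ j, p j * x As j := by
    apply Finset.single_le_sum (f := fun j => p j * x As j)
      (fun j _ => mul_nonneg (hp j) (hx0 j)) (Finset.mem_univ s)
  have hle1 : x As s ≤ 1 := by
    have := le_trans h1 hbud
    nlinarith
  -- x As s ≥ 1 via optimality against y = e_s
  have hge1 : 1 ≤ x As s := by
    have := hmax (fun j => if j = s then 1 else 0)
      (fun j => by positivity)
      (by simp [mul_ite])
    simpa using this
  linarith
end

section
/- (Equality gadget.) Consider an exchange market over a finite set Γ of goods containing three distinct goods a, b, r and two agents A_1, A_2 such that: A_1 has endowment one unit each of goods b and r (and nothing else) and Leontief utility min(y_a, y_r); A_2 has endowment one unit each of goods a and r (and nothing else) and Leontief utility min(y_b, y_r); and good r is exclusive to {A_1, A_2}. Then every equilibrium (p, (x_i)) of the whole market satisfies p_a = p_b; moreover A_1 and A_2 each attain utility exactly 1, their consumptions of good r satisfy x_{A_1,r} = x_{A_2,r} = 1, and no other agent consumes any amount of good r. -/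
open Finset

lemma sum_pair_ite {G : Type*} [Fintype G] [DecidableEq G] (f : G → ℝ) (u v : ℝ)
    (aa rr : G) (h : aa ≠ rr) :
    ∑ j, f j * (if j = aa then u else if j = rr then v else 0) = f aa * u + f rr * v := by
  have key : ∀ j ∈ Finset.univ, f j * (if j = aa then u else if j = rr then v else 0) =
      (if j = aa then f aa * u else 0) + (if j = rr then f rr * v else 0) := by
    intro j _
    by_cases h1 : j = aa
    · subst h1; simp [h]
    · by_cases h2 : j = rr
      · subst h2; simp [h1]
      · simp [h1, h2]
  rw [Finset.sum_congr rfl key, Finset.sum_add_distrib, Finset.sum_ite_eq',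
    Finset.sum_ite_eq']
  simp

lemma sum_pair_ite' {ι : Type*} [Fintype ι] [DecidableEq ι] (u v : ℝ) (aa rr : ι)
    (h : aa ≠ rr) :
    ∑ j, (if j = aa then u else if j = rr then v else 0) = u + v := by
  have := sum_pair_ite (fun _ => (1:ℝ)) u v aa rr h
  simpa using this

lemma price_sum_pos {G : Type*} [Fintype G] [DecidableEq G] (p : G → ℝ)
    (hp : ∀ j, 0 ≤ p j) (a r : G) (β : ℝ) (hβ : 0 ≤ β) (x : G → ℝ)
    (hopt : IsOptimalBundle p β (fun y => min (y a) (y r)) x) :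
    0 < p a + p r := by
  by_contra hc
  push_neg at hc
  have hpa : p a = 0 := le_antisymm (by linarith [hp a, hp r]) (hp a)
  have hpr : p r = 0 := le_antisymm (by linarith [hp a, hp r]) (hp r)
  obtain ⟨hxnn, hxb, hmax⟩ := hopt
  set M := min (x a) (x r) + 1 with hM
  have hM0 : 0 ≤ M := by
    have := le_min (hxnn a) (hxnn r)
    linarith
  set y : G → ℝ := fun j => if j = a then M else if j = r then M else 0 with hy
  have hynn : ∀ j, 0 ≤ y j := by
    intro j; simp only [hy]; split_ifs <;> simp [hM0]
  have hcost : ∑ j, p j * y j ≤ β := by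
    by_cases har : a = r
    · subst har
      have : ∀ j ∈ Finset.univ, p j * y j = 0 := by
        intro j _; simp only [hy]; split_ifs with h1
        · subst h1; simp [hpa]
        · ring
      rw [Finset.sum_congr rfl this]; simpa using hβ
    · rw [hy, sum_pair_ite p M M a r har, hpa, hpr]; simpa using hβ
  have := hmax y hynn hcost
  have hya : y a = M := by simp [hy]
  have hyr : y r = M := by simp only [hy]; split_ifs <;> rfl
  simp only [hya, hyr, min_self] at this
  simp only [hM] at this
  linarith [min_le_min (le_refl (x a)) (le_refl (x r))]

lemma leontief_opt_value {G : Type*} [Fintype G] [DecidableEq G] (p : G → ℝ)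
    (hp : ∀ j, 0 ≤ p j) (a r : G) (har : a ≠ r) (β : ℝ) (hβ : 0 ≤ β) (x : G → ℝ)
    (hopt : IsOptimalBundle p β (fun y => min (y a) (y r)) x)
    (hα : 0 < p a + p r) :
    min (x a) (x r) = β / (p a + p r) := by
  obtain ⟨hxnn, hxb, hmax⟩ := hopt
  set t := β / (p a + p r) with ht
  have ht0 : 0 ≤ t := div_nonneg hβ hα.le
  set y : G → ℝ := fun j => if j = a then t else if j = r then t else 0 with hy
  have hynn : ∀ j, 0 ≤ y j := by
    intro j; simp only [hy]; split_ifs <;> simp [ht0]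
  have hcost : ∑ j, p j * y j ≤ β := by
    rw [hy, sum_pair_ite p t t a r har]
    have : p a * t + p r * t = (p a + p r) * t := by ring
    rw [this, ht, mul_div_cancel₀ _ hα.ne']
  have hle := hmax y hynn hcost
  have hya : y a = t := by simp [hy]
  have hyr : y r = t := by simp only [hy]; split_ifs with h1 <;> first | exact absurd h1.symm har | rfl
  simp only [hya, hyr, min_self] at hle
  refine le_antisymm ?_ hle
  -- spending on a and r alone is at most β
  have hsub : ∑ j ∈ ({a, r} : Finset G), p j * x j ≤ ∑ j, p j * x j := by
    apply Finset.sum_le_sum_of_subset_of_nonneg (Finset.subset_univ _)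
    intro j _ _; exact mul_nonneg (hp j) (hxnn j)
  rw [Finset.sum_pair har] at hsub
  have hmin : (p a + p r) * min (x a) (x r) ≤ p a * x a + p r * x r := by
    have h1 : p a * min (x a) (x r) ≤ p a * x a :=
      mul_le_mul_of_nonneg_left (min_le_left _ _) (hp a)
    have h2 : p r * min (x a) (x r) ≤ p r * x r :=
      mul_le_mul_of_nonneg_left (min_le_right _ _) (hp r)
    linarith
  rw [ht, le_div_iff₀ hα]
  linarith

/-- **Equality gadget.** If an exchange market contains the
equality-gadget submarket on goods `a, b, r` and agents `A1, A2`, with `r`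
exclusive to `{A1, A2}`, then every equilibrium of the whole market satisfies
`p a = p b`; both agents attain utility exactly `1`, each consumes exactly one
unit of `r`, and no other agent consumes any amount of `r`. -/
theorem equality_gadget {ι G : Type*} [Fintype ι] [Fintype G] [DecidableEq G]
    (W : ι → G → ℝ) (U : ι → (G → ℝ) → ℝ) (hW : ∀ i j, 0 ≤ W i j)
    (a b r : G) (hab : a ≠ b) (har : a ≠ r) (hbr : b ≠ r)
    (A1 A2 : ι) (hA12 : A1 ≠ A2)
    (hW1 : W A1 = fun j => if j = b then 1 else if j = r then 1 else 0)
    (hW2 : W A2 = fun j => if j = a then 1 else if j = r then 1 else 0)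
    (hU1 : U A1 = fun y => min (y a) (y r))
    (hU2 : U A2 = fun y => min (y b) (y r))
    (hex : ExclusiveGood W U r {A1, A2})
    (p : G → ℝ) (x : ι → G → ℝ) (h : IsEquilibrium W U p x) :
    p a = p b ∧ U A1 (x A1) = 1 ∧ U A2 (x A2) = 1 ∧
      x A1 r = 1 ∧ x A2 r = 1 ∧
      ∀ i, i ∉ ({A1, A2} : Set ι) → x i r = 0 := by
  classical
  obtain ⟨hp, hopt, hfeas, _hclear⟩ := h
  -- budgets
  have hbud1 : ∑ j, p j * W A1 j = p b + p r := by
    rw [hW1]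
    have := sum_pair_ite p 1 1 b r hbr
    simpa using this
  have hbud2 : ∑ j, p j * W A2 j = p a + p r := by
    rw [hW2]
    have := sum_pair_ite p 1 1 a r har
    simpa using this
  have hopt1 : IsOptimalBundle p (p b + p r) (fun y => min (y a) (y r)) (x A1) := by
    have := hopt A1; rwa [hU1, hbud1] at this
  have hopt2 : IsOptimalBundle p (p a + p r) (fun y => min (y b) (y r)) (x A2) := by
    have := hopt A2; rwa [hU2, hbud2] at this
  have hβ0 : 0 ≤ p b + p r := by linarith [hp b, hp r]
  have hα0 : 0 ≤ p a + p r := by linarith [hp a, hp r]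
  have hα : 0 < p a + p r := price_sum_pos p hp a r (p b + p r) hβ0 (x A1) hopt1
  have hβ : 0 < p b + p r := price_sum_pos p hp b r (p a + p r) hα0 (x A2) hopt2
  have hmin1 : min (x A1 a) (x A1 r) = (p b + p r) / (p a + p r) :=
    leontief_opt_value p hp a r har _ hβ0 (x A1) hopt1 hα
  have hmin2 : min (x A2 b) (x A2 r) = (p a + p r) / (p b + p r) :=
    leontief_opt_value p hp b r hbr _ hα0 (x A2) hopt2 hβ
  -- supply of r
  have hWr : ∀ i, W i r = if i = A1 then 1 else if i = A2 then 1 else 0 := by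
    intro i
    by_cases h1 : i = A1
    · subst h1; rw [hW1]; simp [Ne.symm hbr]
    · by_cases h2 : i = A2
      · subst h2; rw [hW2]; simp [Ne.symm har, h1]
      · simp only [h1, h2, if_false]
        exact (hex i (by simp [Set.mem_insert_iff, h1, h2])).1
  have hsup : ∑ i, W i r = 2 := by
    rw [Finset.sum_congr rfl (fun i _ => hWr i), sum_pair_ite' 1 1 A1 A2 hA12]
    norm_num
  have hdem : ∑ i, x i r ≤ 2 := by
    have := hfeas r; rw [hsup] at this; exact this
  have hpairle : x A1 r + x A2 r ≤ ∑ i, x i r := by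
    have hsub : ∑ i ∈ ({A1, A2} : Finset ι), x i r ≤ ∑ i, x i r := by
      apply Finset.sum_le_sum_of_subset_of_nonneg (Finset.subset_univ _)
      intro i _ _; exact (hopt i).1 r
    rwa [Finset.sum_pair hA12] at hsub
  have hx1r : (p b + p r) / (p a + p r) ≤ x A1 r := hmin1 ▸ min_le_right _ _
  have hx2r : (p a + p r) / (p b + p r) ≤ x A2 r := hmin2 ▸ min_le_right _ _
  -- equality of the two ratios
  set α := p a + p r
  set β := p b + p r
  have hsum2 : β / α + α / β ≤ 2 := by linarith
  have hsq : (α - β) ^ 2 ≤ 0 := by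
    have hkey : β / α + α / β = (β * β + α * α) / (α * β) := by
      field_simp
    rw [hkey, div_le_iff₀ (mul_pos hα hβ)] at hsum2
    nlinarith
  have hαβ : α = β := by nlinarith [sq_nonneg (α - β)]
  have hpab : p a = p b := by
    simp only [α, β] at hαβ; linarith
  have hr1 : β / α = 1 := by rw [hαβ]; exact div_self hβ.ne'
  have hr2 : α / β = 1 := by rw [hαβ]; exact div_self hβ.ne'
  rw [hr1] at hx1r hmin1
  rw [hr2] at hx2r hmin2
  have hxsum : x A1 r + x A2 r ≤ 2 := le_trans hpairle hdem
  have hx1 : x A1 r = 1 := by linarith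
  have hx2 : x A2 r = 1 := by linarith
  refine ⟨hpab, by rw [hU1]; exact hmin1, by rw [hU2]; exact hmin2, hx1, hx2, ?_⟩
  intro i hi
  have hi1 : i ≠ A1 := fun h => hi (by simp [h])
  have hi2 : i ≠ A2 := fun h => hi (by simp [h])
  have hmem : i ∈ Finset.univ \ ({A1, A2} : Finset ι) := by
    simp [hi1, hi2]
  have hrest : ∑ i ∈ Finset.univ \ ({A1, A2} : Finset ι), x i r
      = ∑ i, x i r - (x A1 r + x A2 r) := by
    rw [eq_sub_iff_add_eq, ← Finset.sum_pair hA12 (f := fun i => x i r),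
      Finset.sum_sdiff (Finset.subset_univ _)]
  have hle : x i r ≤ ∑ i ∈ Finset.univ \ ({A1, A2} : Finset ι), x i r :=
    Finset.single_le_sum (fun j _ => (hopt j).1 r) hmem
  have : x i r ≤ 0 := by rw [hrest, hx1, hx2] at hle; linarith
  exact le_antisymm this ((hopt i).1 r)
end

section
/- (Linear gadget.) Let B, C, D ≥ 0. Consider an exchange market over a finite set Γ of goods containing five distinct goods a, b, c, s, r and two agents A_1, A_2 such that: A_1 has endowment one unit each of goods a and r (and nothing else) and the Leontief utility with coefficient vector assigning B to good b, C to good c, D to good s, and 1 to good r (i.e. U_1(y) is the minimum of y_r together with y_b/B, y_c/C, y_s/D taken over those of B, C, D that are positive); A_2 has endowment B units of good b, C units of good c, D units of good s, and one unit of good r (and nothing else), with Leontief utility min(y_a, y_r); and good r is exclusive to {A_1, A_2}. Then every equilibrium (p, (x_i)) of the whole market satisfies p_a = B·p_b + C·p_c + D·p_s, and A_1 and A_2 each attain utility exactly 1 with x_{A_1,r} = x_{A_2,r} = 1. -/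
open Finset

lemma leontief_smul {G : Type*} (A : G → ℝ) (t : ℝ) (hne : ∃ j, 0 < A j) :
    leontief A (fun j => t * A j) = t := by
  have : {u : ℝ | ∃ j, 0 < A j ∧ u = t * A j / A j} = {t} := by
    ext u
    constructor
    · rintro ⟨j, hj, rfl⟩
      simp [mul_div_assoc, div_self hj.ne']
    · rintro rfl
      obtain ⟨j, hj⟩ := hne
      exact ⟨j, hj, by simp [mul_div_assoc, div_self hj.ne']⟩
  rw [leontief, this, csInf_singleton]

lemma leontief_le {G : Type*} [Fintype G] (A : G → ℝ) (y : G → ℝ) (j : G) (hj : 0 < A j) :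
    leontief A y ≤ y j / A j := by
  apply csInf_le
  · apply BddBelow.mono (t := Set.range (fun j => y j / A j))
    · rintro u ⟨k, _, rfl⟩; exact ⟨k, rfl⟩
    · exact (Set.finite_range _).bddBelow
  · exact ⟨j, hj, rfl⟩

set_option maxHeartbeats 1000000 in
/-- **Linear gadget.** If an exchange market contains the
linear-gadget submarket on goods `a, b, c, s, r` (with `B, C, D ≥ 0`) and agents
`A1, A2`, with `r` exclusive to `{A1, A2}`, then every equilibrium of the whole
market satisfies `p a = B·p b + C·p c + D·p s`; both agents attain utility
exactly `1` and each consumes exactly one unit of `r`. -/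
theorem linear_gadget {ι G : Type*} [Fintype ι] [Fintype G] [DecidableEq G]
    (W : ι → G → ℝ) (U : ι → (G → ℝ) → ℝ) (hW : ∀ i j, 0 ≤ W i j)
    (B C D : ℝ) (hB : 0 ≤ B) (hC : 0 ≤ C) (hD : 0 ≤ D)
    (a b c s r : G) (hdist : ([a, b, c, s, r] : List G).Pairwise (· ≠ ·))
    (A1 A2 : ι) (hA12 : A1 ≠ A2)
    (Ac : G → ℝ)
    (hAcb : Ac b = B) (hAcc : Ac c = C) (hAcs : Ac s = D) (hAcr : Ac r = 1)
    (hAc0 : ∀ j, j ∉ ({b, c, s, r} : Set G) → Ac j = 0)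
    (hW1 : W A1 = fun j => if j = a then 1 else if j = r then 1 else 0)
    (hW2 : W A2 = fun j =>
      if j = b then B else if j = c then C else if j = s then D else
        if j = r then 1 else 0)
    (hU1 : U A1 = leontief Ac)
    (hU2 : U A2 = fun y => min (y a) (y r))
    (hex : ExclusiveGood W U r {A1, A2})
    (p : G → ℝ) (x : ι → G → ℝ) (h : IsEquilibrium W U p x) :
    p a = B * p b + C * p c + D * p s ∧
      U A1 (x A1) = 1 ∧ U A2 (x A2) = 1 ∧ x A1 r = 1 ∧ x A2 r = 1 := by
  classical
  obtain ⟨hp, hopt, hmc, -⟩ := h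
  simp only [List.pairwise_cons, List.mem_cons, List.not_mem_nil, or_false,
    List.Pairwise.nil, and_true] at hdist
  have hab : a ≠ b := hdist.1 b (Or.inl rfl)
  have hac : a ≠ c := hdist.1 c (Or.inr (Or.inl rfl))
  have has : a ≠ s := hdist.1 s (Or.inr (Or.inr (Or.inl rfl)))
  have har : a ≠ r := hdist.1 r (Or.inr (Or.inr (Or.inr rfl)))
  have hbc : b ≠ c := hdist.2.1 c (Or.inl rfl)
  have hbs : b ≠ s := hdist.2.1 s (Or.inr (Or.inl rfl))
  have hbr : b ≠ r := hdist.2.1 r (Or.inr (Or.inr rfl))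
  have hcs : c ≠ s := hdist.2.2.1 s (Or.inl rfl)
  have hcr : c ≠ r := hdist.2.2.1 r (Or.inr rfl)
  have hsr : s ≠ r := hdist.2.2.2.1 r rfl
  have hAcpos : ∃ j, 0 < Ac j := ⟨r, by rw [hAcr]; norm_num⟩
  have hAcnn : ∀ j, 0 ≤ Ac j := by
    intro j
    by_cases hjb : j = b; · rw [hjb, hAcb]; exact hB
    by_cases hjc : j = c; · rw [hjc, hAcc]; exact hC
    by_cases hjs : j = s; · rw [hjs, hAcs]; exact hD
    by_cases hjr : j = r; · rw [hjr, hAcr]; norm_num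
    rw [hAc0 j (by simp [hjb, hjc, hjs, hjr])]
  -- budget of agent 1
  have hbud1 : ∑ j, p j * W A1 j = p a + p r := by
    have key : ∀ j, p j * W A1 j = (if j = a then p a else 0) + (if j = r then p r else 0) := by
      intro j
      rw [hW1]
      by_cases hja : j = a
      · subst hja; simp [har]
      · by_cases hjr : j = r <;> simp [hja, hjr, Ne.symm har]
    simp only [key, Finset.sum_add_distrib, Finset.sum_ite_eq', mem_univ, if_true]
  -- budget of agent 2
  have hbud2 : ∑ j, p j * W A2 j = B * p b + C * p c + D * p s + p r := by
    have key : ∀ j, p j * W A2 j = (if j = b then B * p b else 0) + (if j = c then C * p c else 0)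
        + (if j = s then D * p s else 0) + (if j = r then p r else 0) := by
      intro j
      rw [hW2]
      by_cases hjb : j = b
      · subst hjb; simp [hbc, hbs, hbr]; ring
      by_cases hjc : j = c
      · subst hjc; simp [hjb, hcs, hcr]; ring
      by_cases hjs : j = s
      · subst hjs; simp [hjb, hjc, hsr]; ring
      by_cases hjr : j = r <;>
        simp [hjb, hjc, hjs, hjr, Ne.symm hbr, Ne.symm hcr, Ne.symm hsr]
    simp only [key, Finset.sum_add_distrib, Finset.sum_ite_eq', mem_univ, if_true]
  -- sum of p * Ac
  have hpAc : ∑ j, p j * Ac j = B * p b + C * p c + D * p s + p r := by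
    have key : ∀ j, p j * Ac j = (if j = b then B * p b else 0) + (if j = c then C * p c else 0)
        + (if j = s then D * p s else 0) + (if j = r then p r else 0) := by
      intro j
      by_cases hjb : j = b
      · subst hjb; simp [hbc, hbs, hbr, hAcb]; ring
      by_cases hjc : j = c
      · subst hjc; simp [hjb, hcs, hcr, hAcc]; ring
      by_cases hjs : j = s
      · subst hjs; simp [hjb, hjc, hsr, hAcs]; ring
      by_cases hjr : j = r
      · subst hjr; simp [hjb, hjc, hjs, hAcr]
      · simp [hjb, hjc, hjs, hjr, hAc0 j (by simp [hjb, hjc, hjs, hjr])]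
    simp only [key, Finset.sum_add_distrib, Finset.sum_ite_eq', mem_univ, if_true]
  obtain ⟨hx1nn, hx1bud, hx1opt⟩ := hopt A1
  obtain ⟨hx2nn, hx2bud, hx2opt⟩ := hopt A2
  rw [hbud1] at hx1bud hx1opt
  rw [hbud2] at hx2bud hx2opt
  -- positivity of the two key price aggregates
  have hQr : 0 < B * p b + C * p c + D * p s + p r := by
    rcases lt_or_ge 0 (B * p b + C * p c + D * p s + p r) with h' | h'
    · exact h'
    have hzero : B * p b + C * p c + D * p s + p r = 0 := by
      have h1 : 0 ≤ B * p b := mul_nonneg hB (hp b)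
      have h2 : 0 ≤ C * p c := mul_nonneg hC (hp c)
      have h3 : 0 ≤ D * p s := mul_nonneg hD (hp s)
      linarith [hp r]
    set M : ℝ := max (U A1 (x A1) + 1) 1 with hM
    have hM1 : U A1 (x A1) + 1 ≤ M := le_max_left _ _
    have hMpos : 0 < M := lt_of_lt_of_le one_pos (le_max_right _ _)
    have hle := hx1opt (fun j => M * Ac j)
      (fun j => mul_nonneg hMpos.le (hAcnn j))
      (by
        have : ∑ j, p j * (M * Ac j) = M * ∑ j, p j * Ac j := by
          rw [Finset.mul_sum]; congr 1; ext j; ring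
        rw [this, hpAc, hzero, mul_zero]
        have := hp a; have := hp r; linarith)
    rw [hU1, leontief_smul Ac M hAcpos] at hle
    rw [hU1] at hM1
    linarith
  have hPr : 0 < p a + p r := by
    rcases lt_or_ge 0 (p a + p r) with h' | h'
    · exact h'
    have hpa : p a = 0 := le_antisymm (by linarith [hp r]) (hp a)
    have hpr : p r = 0 := le_antisymm (by linarith [hp a]) (hp r)
    set M : ℝ := max (U A2 (x A2) + 1) 1 with hM
    have hM1 : U A2 (x A2) + 1 ≤ M := le_max_left _ _
    have hMpos : 0 < M := lt_of_lt_of_le one_pos (le_max_right _ _)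
    have hle := hx2opt (fun j => if j = a then M else if j = r then M else 0)
      (fun j => by by_cases hja : j = a <;> by_cases hjr : j = r <;> simp [hja, hjr, hMpos.le])
      (by
        have key : ∀ j, p j * (if j = a then M else if j = r then M else 0)
            = (if j = a then p a * M else 0) + (if j = r then p r * M else 0) := by
          intro j
          by_cases hja : j = a
          · subst hja; simp [har]
          · by_cases hjr : j = r <;> simp [hja, hjr, Ne.symm har]
        simp only [key, Finset.sum_add_distrib, Finset.sum_ite_eq', mem_univ, if_true]
        rw [hpa, hpr]
        have h1 : 0 ≤ B * p b := mul_nonneg hB (hp b)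
        have h2 : 0 ≤ C * p c := mul_nonneg hC (hp c)
        have h3 : 0 ≤ D * p s := mul_nonneg hD (hp s)
        linarith [hp r])
    have hUy : U A2 (fun j => if j = a then M else if j = r then M else 0) = M := by
      rw [hU2]; simp [Ne.symm har]
    rw [hUy] at hle
    linarith
  -- value of agent 1's utility
  have hU1lb : (p a + p r) / (B * p b + C * p c + D * p s + p r) ≤ U A1 (x A1) := by
    set t := (p a + p r) / (B * p b + C * p c + D * p s + p r) with ht
    have htpos : 0 < t := div_pos hPr hQr
    have hle := hx1opt (fun j => t * Ac j)
      (fun j => mul_nonneg htpos.le (hAcnn j))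
      (by
        have : ∑ j, p j * (t * Ac j) = t * ∑ j, p j * Ac j := by
          rw [Finset.mul_sum]; congr 1; ext j; ring
        rw [this, hpAc, ht, div_mul_cancel₀ _ hQr.ne'])
    rw [hU1, leontief_smul Ac t hAcpos] at hle
    rw [hU1]; exact hle
  have hU1r : U A1 (x A1) ≤ x A1 r := by
    have := leontief_le Ac (x A1) r (by rw [hAcr]; norm_num)
    rw [hAcr, div_one] at this
    rw [hU1]; exact this
  have hU1pos : 0 < U A1 (x A1) := lt_of_lt_of_le (div_pos hPr hQr) hU1lb
  have hU1ub : U A1 (x A1) ≤ (p a + p r) / (B * p b + C * p c + D * p s + p r) := by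
    rw [le_div_iff₀ hQr]
    -- cost of x A1 is at least U * (Q + p r)
    have hterm : ∀ j ∈ ({b, c, s, r} : Finset G),
        U A1 (x A1) * (Ac j) * p j ≤ p j * x A1 j := by
      intro j _
      by_cases hj : 0 < Ac j
      · have h1 : U A1 (x A1) ≤ x A1 j / Ac j := by
          rw [hU1]; exact leontief_le Ac (x A1) j hj
        have h2 : U A1 (x A1) * Ac j ≤ x A1 j := by
          rw [← le_div_iff₀ hj]; exact h1
        calc U A1 (x A1) * Ac j * p j ≤ x A1 j * p j :=
              mul_le_mul_of_nonneg_right h2 (hp j)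
          _ = p j * x A1 j := by ring
      · have : Ac j = 0 := le_antisymm (not_lt.mp hj) (hAcnn j)
        rw [this]
        simp [mul_nonneg (hp j) (hx1nn j)]
    have hsub : ∑ j ∈ ({b, c, s, r} : Finset G), p j * x A1 j ≤ ∑ j, p j * x A1 j := by
      apply Finset.sum_le_sum_of_subset_of_nonneg (Finset.subset_univ _)
      intro j _ _
      exact mul_nonneg (hp j) (hx1nn j)
    have hsum1 : ∑ j ∈ ({b, c, s, r} : Finset G), U A1 (x A1) * (Ac j) * p j
        = U A1 (x A1) * (B * p b + C * p c + D * p s + p r) := by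
      rw [Finset.sum_insert (by simp [hbc, hbs, hbr]),
        Finset.sum_insert (by simp [hcs, hcr]),
        Finset.sum_insert (by simp [hsr]), Finset.sum_singleton,
        hAcb, hAcc, hAcs, hAcr]
      ring
    calc U A1 (x A1) * (B * p b + C * p c + D * p s + p r)
        = ∑ j ∈ ({b, c, s, r} : Finset G), U A1 (x A1) * (Ac j) * p j := hsum1.symm
      _ ≤ ∑ j ∈ ({b, c, s, r} : Finset G), p j * x A1 j := Finset.sum_le_sum hterm
      _ ≤ ∑ j, p j * x A1 j := hsub
      _ ≤ p a + p r := hx1bud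
  have hU1val : U A1 (x A1) = (p a + p r) / (B * p b + C * p c + D * p s + p r) :=
    le_antisymm hU1ub hU1lb
  -- value of agent 2's utility
  have hU2lb : (B * p b + C * p c + D * p s + p r) / (p a + p r) ≤ U A2 (x A2) := by
    set t := (B * p b + C * p c + D * p s + p r) / (p a + p r) with ht
    have htpos : 0 < t := div_pos hQr hPr
    have hle := hx2opt (fun j => if j = a then t else if j = r then t else 0)
      (fun j => by by_cases hja : j = a <;> by_cases hjr : j = r <;> simp [hja, hjr, htpos.le])
      (by
        have key : ∀ j, p j * (if j = a then t else if j = r then t else 0)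
            = (if j = a then p a * t else 0) + (if j = r then p r * t else 0) := by
          intro j
          by_cases hja : j = a
          · subst hja; simp [har]
          · by_cases hjr : j = r <;> simp [hja, hjr, Ne.symm har]
        simp only [key, Finset.sum_add_distrib, Finset.sum_ite_eq', mem_univ, if_true]
        have : p a * t + p r * t = (p a + p r) * t := by ring
        rw [this, ht, mul_div_cancel₀ _ hPr.ne'])
    have hUy : U A2 (fun j => if j = a then t else if j = r then t else 0) = t := by
      rw [hU2]; simp [Ne.symm har]
    rw [hUy] at hle
    exact hle
  have hU2r : U A2 (x A2) ≤ x A2 r := by rw [hU2]; exact min_le_right _ _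
  have hU2a : U A2 (x A2) ≤ x A2 a := by rw [hU2]; exact min_le_left _ _
  have hU2ub : U A2 (x A2) ≤ (B * p b + C * p c + D * p s + p r) / (p a + p r) := by
    rw [le_div_iff₀ hPr]
    have hsub : ∑ j ∈ ({a, r} : Finset G), p j * x A2 j ≤ ∑ j, p j * x A2 j := by
      apply Finset.sum_le_sum_of_subset_of_nonneg (Finset.subset_univ _)
      intro j _ _
      exact mul_nonneg (hp j) (hx2nn j)
    have hsum2 : ∑ j ∈ ({a, r} : Finset G), p j * x A2 j = p a * x A2 a + p r * x A2 r := by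
      rw [Finset.sum_insert (by simp [har]), Finset.sum_singleton]
    calc U A2 (x A2) * (p a + p r) = p a * U A2 (x A2) + p r * U A2 (x A2) := by ring
      _ ≤ p a * x A2 a + p r * x A2 r := by
          gcongr
          · exact hp a
          · exact hp r
      _ = ∑ j ∈ ({a, r} : Finset G), p j * x A2 j := hsum2.symm
      _ ≤ ∑ j, p j * x A2 j := hsub
      _ ≤ B * p b + C * p c + D * p s + p r := hx2bud
  have hU2val : U A2 (x A2) = (B * p b + C * p c + D * p s + p r) / (p a + p r) :=
    le_antisymm hU2ub hU2lb
  -- market for good r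
  have hsup : ∑ i, W i r = 2 := by
    have key : ∀ i, W i r = (if i = A1 then (1:ℝ) else 0) + (if i = A2 then 1 else 0) := by
      intro i
      by_cases hi1 : i = A1
      · subst hi1; rw [hW1]; simp [Ne.symm har, hA12]
      by_cases hi2 : i = A2
      · subst hi2; rw [hW2]; simp [Ne.symm hbr, Ne.symm hcr, Ne.symm hsr, hi1]
      · have := (hex i (by simp [hi1, hi2])).1
        rw [this]; simp [hi1, hi2]
    simp only [key, Finset.sum_add_distrib, Finset.sum_ite_eq', mem_univ, if_true]
    norm_num
  have hdem : x A1 r + x A2 r ≤ 2 := by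
    have h1 : ∑ i ∈ ({A1, A2} : Finset ι), x i r ≤ ∑ i, x i r := by
      apply Finset.sum_le_sum_of_subset_of_nonneg (Finset.subset_univ _)
      intro i _ _
      exact (hopt i).1 r
    rw [Finset.sum_pair hA12] at h1
    calc x A1 r + x A2 r ≤ ∑ i, x i r := h1
      _ ≤ ∑ i, W i r := hmc r
      _ = 2 := hsup
  -- conclude
  set P := p a + p r with hP
  set Q := B * p b + C * p c + D * p s + p r with hQ
  have hsumle : P / Q + Q / P ≤ 2 := by
    have h1 : P / Q ≤ x A1 r := le_trans (le_of_eq hU1val.symm) hU1r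
    have h2 : Q / P ≤ x A2 r := le_trans (le_of_eq hU2val.symm) hU2r
    linarith
  have hPQ : P = Q := by
    have hPQpos : 0 < P * Q := mul_pos hPr hQr
    have h0 : (P / Q + Q / P) * (P * Q) ≤ 2 * (P * Q) :=
      mul_le_mul_of_nonneg_right hsumle hPQpos.le
    have h3 : P * P + Q * Q ≤ 2 * (P * Q) := by
      have e1 : P / Q * (P * Q) = P * P := by
        rw [mul_comm P Q, ← mul_assoc, div_mul_cancel₀ _ hQr.ne']
      have he : (P / Q + Q / P) * (P * Q) = P * P + Q * Q := by
        rw [add_mul, e1, ← mul_assoc, div_mul_cancel₀ _ hPr.ne']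
      linarith [he ▸ h0]
    have h4 : (P - Q) ^ 2 ≤ 0 := by
      have : (P - Q) ^ 2 = P * P + Q * Q - 2 * (P * Q) := by ring
      linarith
    have h5 : (P - Q) ^ 2 = 0 := le_antisymm h4 (sq_nonneg _)
    have h6 : P - Q = 0 := by
      exact pow_eq_zero_iff (n := 2) (by norm_num) |>.mp h5
    linarith
  have hpa : p a = B * p b + C * p c + D * p s := by
    have : p a + p r = B * p b + C * p c + D * p s + p r := hPQ
    linarith
  have hU1one : U A1 (x A1) = 1 := by rw [hU1val, hPQ, div_self hQr.ne']
  have hU2one : U A2 (x A2) = 1 := by rw [hU2val, ← hPQ, div_self hPr.ne']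
  have hx1r : 1 ≤ x A1 r := hU1one ▸ hU1r
  have hx2r : 1 ≤ x A2 r := hU2one ▸ hU2r
  exact ⟨hpa, hU1one, hU2one, by linarith, by linarith⟩
end

section
/- (Linear gadget, converse.) Let B, C, D ≥ 0 and let p_b, p_c, p_s ≥ 0 be arbitrary. Consider the exchange market whose goods are exactly {a, b, c, s, r} and whose agents are exactly A_1, with endowment one unit each of goods a and r and the Leontief utility with coefficient vector assigning B to b, C to c, D to s, and 1 to r, and A_2, with endowment B units of b, C units of c, D units of s, and one unit of r, and Leontief utility min(y_a, y_r). Then this market admits an equilibrium with prices p_a = B·p_b + C·p_c + D·p_s, p_b, p_c, p_s, and p_r = 1, in which A_1 consumes B units of b, C units of c, D units of s, and 1 unit of r, and A_2 consumes 1 unit each of a and r. -/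
open Finset

/-!
Both agents end up consuming exactly their Leontief coefficient vectors, and the price of `a`
is the value of the basket `(B, C, D)` of `b, c, s`, so each agent's endowment is worth exactly
the bundle it receives. A Leontief agent with coefficients `A` and budget `p ⬝ A` cannot do
better than `A` itself: a bundle `y` of utility `t` dominates `t • A`, so it costs at least
`t * (p ⬝ A)`. Since the two bundles exactly redistribute the endowments, markets clear.
-/

section Leontief

variable {G : Type*}

lemma leontief_self {A : G → ℝ} {j₀ : G} (hj₀ : 0 < A j₀) : leontief A A = 1 := by
  have hset : {t : ℝ | ∃ j, 0 < A j ∧ t = A j / A j} = {1} := by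
    ext t
    constructor
    · rintro ⟨j, hj, rfl⟩
      exact div_self hj.ne'
    · rintro rfl
      exact ⟨j₀, hj₀, (div_self hj₀.ne').symm⟩
  rw [leontief, hset, csInf_singleton]

lemma leontief_mul_le {A y : G → ℝ} (hy : ∀ j, 0 ≤ y j) {j : G} (hAj : 0 ≤ A j) :
    leontief A y * A j ≤ y j := by
  rcases hAj.eq_or_lt with hzero | hpos
  · rw [← hzero, mul_zero]
    exact hy j
  · have hbdd : BddBelow {t : ℝ | ∃ j, 0 < A j ∧ t = y j / A j} :=
      ⟨0, fun _ ⟨k, hk, ht⟩ => ht ▸ div_nonneg (hy k) hk.le⟩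
    exact (le_div_iff₀ hpos).mp (csInf_le hbdd ⟨j, hpos, rfl⟩)

lemma leontief_eq_min {A : G → ℝ} {i j : G} (hi : A i = 1) (hj : A j = 1)
    (hA : ∀ k, 0 < A k → k = i ∨ k = j) (y : G → ℝ) :
    leontief A y = min (y i) (y j) := by
  have hset : {t : ℝ | ∃ k, 0 < A k ∧ t = y k / A k} = {y i, y j} := by
    ext t
    constructor
    · rintro ⟨k, hk, rfl⟩
      rcases hA k hk with rfl | rfl <;> simp [hi, hj]
    · rintro (rfl | rfl)
      · exact ⟨i, by rw [hi]; exact one_pos, by rw [hi, div_one]⟩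
      · exact ⟨j, by rw [hj]; exact one_pos, by rw [hj, div_one]⟩
  rw [leontief, hset, csInf_pair]

variable [Fintype G]

lemma leontief_le_one_of_budget {A p y : G → ℝ} (hA : ∀ j, 0 ≤ A j) (hp : ∀ j, 0 ≤ p j)
    (hy : ∀ j, 0 ≤ y j) (hbudget : ∑ j, p j * y j ≤ ∑ j, p j * A j)
    (hcost : 0 < ∑ j, p j * A j) :
    leontief A y ≤ 1 := by
  have hscaled : leontief A y * ∑ j, p j * A j ≤ 1 * ∑ j, p j * A j :=
    calc leontief A y * ∑ j, p j * A j
        = ∑ j, p j * (leontief A y * A j) := by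
          rw [Finset.mul_sum]
          exact Finset.sum_congr rfl fun j _ => by ring
      _ ≤ ∑ j, p j * y j :=
          Finset.sum_le_sum fun j _ => mul_le_mul_of_nonneg_left (leontief_mul_le hy (hA j)) (hp j)
      _ ≤ 1 * ∑ j, p j * A j := by rw [one_mul]; exact hbudget
  exact le_of_mul_le_mul_right hscaled hcost

lemma isOptimalBundle_leontief_self {A p : G → ℝ} (hA : ∀ j, 0 ≤ A j) (hp : ∀ j, 0 ≤ p j)
    (hcost : 0 < ∑ j, p j * A j) :
    IsOptimalBundle p (∑ j, p j * A j) (leontief A) A := by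
  obtain ⟨j₀, -, hj₀⟩ := Finset.exists_lt_of_sum_lt (f := fun _ => (0 : ℝ)) (g := fun j => p j * A j)
    (by simpa using hcost)
  refine ⟨hA, le_rfl, fun y hy hbudget => ?_⟩
  rw [leontief_self (pos_of_mul_pos_right hj₀ (hp j₀))]
  exact leontief_le_one_of_budget hA hp hy hbudget hcost

end Leontief

theorem isEquilibrium_leontief_self {ι G : Type*} [Fintype ι] [Fintype G]
    {W x : ι → G → ℝ} {p : G → ℝ} (hp : ∀ j, 0 ≤ p j) (hx : ∀ i j, 0 ≤ x i j)
    (hbudget : ∀ i, ∑ j, p j * W i j = ∑ j, p j * x i j)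
    (hcost : ∀ i, 0 < ∑ j, p j * x i j)
    (hclear : ∀ j, ∑ i, x i j = ∑ i, W i j) :
    IsEquilibrium W (fun i => leontief (x i)) p x :=
  ⟨hp, fun i => hbudget i ▸ isOptimalBundle_leontief_self (hx i) hp (hcost i),
    fun j => (hclear j).le, fun j _ => hclear j⟩

/-- **Linear gadget, converse.** For any `B, C, D ≥ 0` and
nonnegative `p_b, p_c, p_s`, the five-good (`a,b,c,s,r = 0,1,2,3,4`) two-agent
linear-gadget market admits an equilibrium with prices
`(B·p_b + C·p_c + D·p_s, p_b, p_c, p_s, 1)` and the indicated allocations. -/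
theorem linear_gadget_converse (B C D pb pc ps : ℝ)
    (hB : 0 ≤ B) (hC : 0 ≤ C) (hD : 0 ≤ D)
    (hpb : 0 ≤ pb) (hpc : 0 ≤ pc) (hps : 0 ≤ ps) :
    IsEquilibrium
      (ι := Fin 2) (G := Fin 5)
      ![![1, 0, 0, 0, 1], ![0, B, C, D, 1]]
      ![leontief ![0, B, C, D, 1], fun y => min (y 0) (y 4)]
      ![B * pb + C * pc + D * ps, pb, pc, ps, 1]
      ![![0, B, C, D, 1], ![1, 0, 0, 0, 1]] := by
  have hU : ![leontief ![0, B, C, D, 1], fun y : Fin 5 → ℝ => min (y 0) (y 4)] =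
      fun i => leontief (![![0, B, C, D, 1], ![1, 0, 0, 0, 1]] i) := by
    funext i y
    fin_cases i
    · rfl
    · refine (leontief_eq_min (i := 0) (j := 4) rfl rfl (fun k hk => ?_) y).symm
      fin_cases k <;> simp_all
  rw [hU]
  apply isEquilibrium_leontief_self
  · intro j
    fin_cases j <;> simp <;> positivity
  · intro i j
    fin_cases i <;> fin_cases j <;> simp [*]
  · intro i
    fin_cases i <;> simp [Fin.sum_univ_five] <;> ring
  · intro i
    fin_cases i <;> simp [Fin.sum_univ_five] <;> positivity
  · intro j
    fin_cases j <;> simp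
end

section
/- (General linear gadget.) Let n ≥ 1 and let E_0, E_1, …, E_n ≥ 0. Consider an exchange market over a finite set Γ of goods containing distinct goods a, b_1, …, b_n, s, r and two agents A_1, A_2 such that: A_1 has endowment one unit each of goods a and r (and nothing else) and the Leontief utility with coefficient vector assigning E_i to good b_i for each i, E_0 to good s, and 1 to good r; A_2 has endowment E_i units of good b_i for each i, E_0 units of good s, and one unit of good r (and nothing else), with Leontief utility min(y_a, y_r); and good r is exclusive to {A_1, A_2}. Then every equilibrium (p, (x_i)) of the whole market satisfies p_a = E_1·p_{b_1} + … + E_n·p_{b_n} + E_0·p_s. -/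
open Finset

lemma glg_sum_support {G : Type*} [Fintype G] [DecidableEq G] (p : G → ℝ) {n : ℕ}
    (b : Fin n → G) (hb : Function.Injective b) (s r : G) (hsr : s ≠ r)
    (hsb : ∀ i, s ≠ b i) (hrb : ∀ i, r ≠ b i)
    (v : G → ℝ) (c : Fin n → ℝ) (cs cr : ℝ)
    (hvb : ∀ i, v (b i) = c i) (hvs : v s = cs) (hvr : v r = cr)
    (hv0 : ∀ j, j ∉ Set.range b → j ≠ s → j ≠ r → v j = 0) :
    ∑ j, p j * v j = (∑ i, c i * p (b i)) + cs * p s + cr * p r := by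
  classical
  set T : Finset G := (Finset.univ.image b) ∪ {s, r} with hT
  have hsum : ∑ j, p j * v j = ∑ j ∈ T, p j * v j := by
    refine (Finset.sum_subset (Finset.subset_univ T) ?_).symm
    intro j _ hj
    simp only [hT, Finset.mem_union, Finset.mem_image, Finset.mem_insert,
      Finset.mem_singleton, not_or, not_exists] at hj
    have h1 : j ∉ Set.range b := by
      rintro ⟨i, rfl⟩; exact hj.1 i ⟨Finset.mem_univ i, rfl⟩
    rw [hv0 j h1 hj.2.1 hj.2.2, mul_zero]
  have hdisj : Disjoint (Finset.univ.image b) ({s, r} : Finset G) := by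
    rw [Finset.disjoint_left]
    intro j hj hj2
    simp only [Finset.mem_image] at hj
    obtain ⟨i, _, rfl⟩ := hj
    simp only [Finset.mem_insert, Finset.mem_singleton] at hj2
    rcases hj2 with h | h
    · exact hsb i h.symm
    · exact hrb i h.symm
  have himg : ∑ j ∈ Finset.univ.image b, p j * v j = ∑ i, c i * p (b i) := by
    rw [Finset.sum_image (fun i _ i' _ hh => hb hh)]
    exact Finset.sum_congr rfl (fun i _ => by rw [hvb i]; ring)
  rw [hsum, hT, Finset.sum_union hdisj, himg, Finset.sum_pair hsr, hvs, hvr]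
  ring

lemma glg_sum_pair {G : Type*} [Fintype G] [DecidableEq G] (p : G → ℝ) (a r : G)
    (har : a ≠ r) (t : ℝ) :
    ∑ j, p j * (if j = a then t else if j = r then t else 0) = t * (p a + p r) := by
  have key : ∀ j, p j * (if j = a then t else if j = r then t else 0)
      = (if j = a then t * p a else 0) + (if j = r then t * p r else 0) := by
    intro j
    by_cases h1 : j = a
    · subst h1; simp [har, mul_comm]
    · by_cases h2 : j = r
      · subst h2; simp [h1, mul_comm]
      · simp [h1, h2]
  simp_rw [key, Finset.sum_add_distrib, Finset.sum_ite_eq' Finset.univ,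
    Finset.mem_univ, if_true]
  ring

lemma glg_leontief_smul {G : Type*} (Ac : G → ℝ) (r : G) (hr : Ac r = 1) (t : ℝ) :
    leontief Ac (fun j => t * Ac j) = t := by
  have hset : {u : ℝ | ∃ j, 0 < Ac j ∧ u = (fun j => t * Ac j) j / Ac j} = {t} := by
    ext u
    simp only [Set.mem_setOf_eq, Set.mem_singleton_iff]
    constructor
    · rintro ⟨j, hj, rfl⟩
      rw [mul_div_assoc, div_self (ne_of_gt hj), mul_one]
    · rintro rfl
      exact ⟨r, by rw [hr]; exact one_pos, by rw [hr]; ring⟩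
  rw [leontief, hset, csInf_singleton]

lemma glg_leontief_le {G : Type*} [Fintype G] (Ac y : G → ℝ) (r : G) (hr : Ac r = 1) :
    leontief Ac y ≤ y r := by
  have hmem : y r ∈ {t : ℝ | ∃ j, 0 < Ac j ∧ t = y j / Ac j} :=
    ⟨r, by rw [hr]; exact one_pos, by rw [hr, div_one]⟩
  have hsub : {t : ℝ | ∃ j, 0 < Ac j ∧ t = y j / Ac j} ⊆
      Set.range (fun j => y j / Ac j) := by
    rintro u ⟨j, _, rfl⟩; exact ⟨j, rfl⟩
  exact csInf_le (Set.Finite.bddBelow ((Set.finite_range _).subset hsub)) hmem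

/-- **General linear gadget.** For `n ≥ 1` and nonnegative
constants `E_0, E_1, …, E_n`, if an exchange market contains the generalized
linear-gadget submarket on goods `a, b_1, …, b_n, s, r` and agents `A1, A2`,
with `r` exclusive to `{A1, A2}`, then every equilibrium of the whole market
satisfies `p a = E_1·p (b 1) + … + E_n·p (b n) + E_0·p s`. -/
theorem general_linear_gadget {ι G : Type*} [Fintype ι] [Fintype G] [DecidableEq G]
    (W : ι → G → ℝ) (U : ι → (G → ℝ) → ℝ) (hW : ∀ i j, 0 ≤ W i j)
    (n : ℕ) (hn : 1 ≤ n) (E0 : ℝ) (E : Fin n → ℝ) (hE0 : 0 ≤ E0) (hE : ∀ i, 0 ≤ E i)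
    (a s r : G) (b : Fin n → G) (hb : Function.Injective b)
    (has : a ≠ s) (har : a ≠ r) (hsr : s ≠ r)
    (hab : ∀ i, a ≠ b i) (hsb : ∀ i, s ≠ b i) (hrb : ∀ i, r ≠ b i)
    (A1 A2 : ι) (hA12 : A1 ≠ A2)
    (Ac : G → ℝ)
    (hAcb : ∀ i, Ac (b i) = E i) (hAcs : Ac s = E0) (hAcr : Ac r = 1)
    (hAc0 : ∀ j, j ∉ Set.range b → j ≠ s → j ≠ r → Ac j = 0)
    (hW1 : W A1 = fun j => if j = a then 1 else if j = r then 1 else 0)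
    (hW2b : ∀ i, W A2 (b i) = E i) (hW2s : W A2 s = E0) (hW2r : W A2 r = 1)
    (hW2o : ∀ j, j ∉ Set.range b → j ≠ s → j ≠ r → W A2 j = 0)
    (hW2a : W A2 a = 0)
    (hU1 : U A1 = leontief Ac)
    (hU2 : U A2 = fun y => min (y a) (y r))
    (hex : ExclusiveGood W U r {A1, A2})
    (p : G → ℝ) (x : ι → G → ℝ) (h : IsEquilibrium W U p x) :
    p a = (∑ i, E i * p (b i)) + E0 * p s := by
  classical
  obtain ⟨hp, hopt, hle, -⟩ := h
  set Q : ℝ := (∑ i, E i * p (b i)) + E0 * p s with hQ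
  -- A1's budget
  have hB1 : ∑ j, p j * W A1 j = p a + p r := by
    rw [hW1, glg_sum_pair p a r har 1]; ring
  -- A2's budget
  have hB2 : ∑ j, p j * W A2 j = Q + p r := by
    rw [glg_sum_support p b hb s r hsr hsb hrb (W A2) E E0 1 hW2b hW2s hW2r hW2o]; ring
  -- price of the coefficient vector
  have hAcp : ∑ j, p j * Ac j = Q + p r := by
    rw [glg_sum_support p b hb s r hsr hsb hrb Ac E E0 1 hAcb hAcs hAcr hAc0]; ring
  have hQ0 : 0 ≤ Q := by
    have h1 : 0 ≤ ∑ i, E i * p (b i) :=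
      Finset.sum_nonneg fun i _ => mul_nonneg (hE i) (hp (b i))
    have h2 : 0 ≤ E0 * p s := mul_nonneg hE0 (hp s)
    linarith
  have hAcnn : ∀ j, 0 ≤ Ac j := by
    intro j
    by_cases h1 : j ∈ Set.range b
    · obtain ⟨i, rfl⟩ := h1; rw [hAcb i]; exact hE i
    · by_cases h2 : j = s
      · subst h2; rw [hAcs]; exact hE0
      · by_cases h3 : j = r
        · subst h3; rw [hAcr]; exact zero_le_one
        · rw [hAc0 j h1 h2 h3]
  obtain ⟨hx1nn, hx1b, hx1opt⟩ := hopt A1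
  obtain ⟨hx2nn, hx2b, hx2opt⟩ := hopt A2
  set u1 : ℝ := U A1 (x A1) with hu1
  set u2 : ℝ := U A2 (x A2) with hu2
  have hra : r ≠ a := Ne.symm har
  -- helper: cost of scaled coefficient bundle
  have hcost1 : ∀ t : ℝ, ∑ j, p j * (t * Ac j) = t * (Q + p r) := by
    intro t
    rw [← hAcp, Finset.mul_sum]
    exact Finset.sum_congr rfl fun j _ => by ring
  -- helper: value of A2's utility on the two-good bundle
  have hval2 : ∀ t : ℝ,
      U A2 (fun j => if j = a then t else if j = r then t else 0) = t := by
    intro t; rw [hU2]; simp [hra]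
  -- A2's budget is positive
  have hB2pos : 0 < Q + p r := by
    by_contra hc
    have hzero : Q + p r = 0 := le_antisymm (not_lt.mp hc) (by linarith [hp r])
    set t : ℝ := max u1 0 + 1 with ht
    have ht0 : 0 ≤ t := by positivity
    have htu : u1 < t := lt_of_le_of_lt (le_max_left u1 0) (by linarith)
    have hy : U A1 (fun j => t * Ac j) ≤ u1 := by
      refine hx1opt _ (fun j => mul_nonneg ht0 (hAcnn j)) ?_
      rw [hcost1 t, hzero, mul_zero]
      exact Finset.sum_nonneg fun j _ => mul_nonneg (hp j) (hW A1 j)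
    rw [hU1, glg_leontief_smul Ac r hAcr t] at hy
    linarith
  -- A1's budget is positive
  have hB1pos : 0 < p a + p r := by
    by_contra hc
    have hzero : p a + p r = 0 := le_antisymm (not_lt.mp hc) (add_nonneg (hp a) (hp r))
    set t : ℝ := max u2 0 + 1 with ht
    have ht0 : 0 ≤ t := by positivity
    have htu : u2 < t := lt_of_le_of_lt (le_max_left u2 0) (by linarith)
    have hy : U A2 (fun j => if j = a then t else if j = r then t else 0) ≤ u2 := by
      refine hx2opt _ (fun j => by by_cases h1 : j = a <;> by_cases h2 : j = r <;>
        simp [h1, h2, ht0]) ?_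
      rw [glg_sum_pair p a r har t, hzero, mul_zero]
      exact Finset.sum_nonneg fun j _ => mul_nonneg (hp j) (hW A2 j)
    rw [hval2 t] at hy
    linarith
  -- u1 ≥ B1 / B2
  have hu1ge : (p a + p r) / (Q + p r) ≤ u1 := by
    set t : ℝ := (p a + p r) / (Q + p r) with ht
    have ht0 : 0 ≤ t := div_nonneg (le_of_lt hB1pos) (le_of_lt hB2pos)
    have hy : U A1 (fun j => t * Ac j) ≤ u1 := by
      refine hx1opt _ (fun j => mul_nonneg ht0 (hAcnn j)) ?_
      rw [hcost1 t, hB1, ht, div_mul_cancel₀ _ (ne_of_gt hB2pos)]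
    rwa [hU1, glg_leontief_smul Ac r hAcr t] at hy
  -- u2 ≥ B2 / B1
  have hu2ge : (Q + p r) / (p a + p r) ≤ u2 := by
    set t : ℝ := (Q + p r) / (p a + p r) with ht
    have ht0 : 0 ≤ t := div_nonneg (le_of_lt hB2pos) (le_of_lt hB1pos)
    have hy : U A2 (fun j => if j = a then t else if j = r then t else 0) ≤ u2 := by
      refine hx2opt _ (fun j => by by_cases h1 : j = a <;> by_cases h2 : j = r <;>
        simp [h1, h2, ht0]) ?_
      rw [glg_sum_pair p a r har t, hB2, ht, div_mul_cancel₀ _ (ne_of_gt hB1pos)]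
    rwa [hval2 t] at hy
  -- u1 ≤ x A1 r
  have hu1le : u1 ≤ x A1 r := by
    rw [hu1, hU1]; exact glg_leontief_le Ac (x A1) r hAcr
  -- u2 ≤ x A2 r
  have hu2le : u2 ≤ x A2 r := by
    rw [hu2, hU2]; exact min_le_right _ _
  -- total demand for r is at most 2
  have hsupply : ∑ i, W i r = 2 := by
    have hzero : ∀ i ∈ Finset.univ, i ∉ ({A1, A2} : Finset ι) → W i r = 0 := by
      intro i _ hi
      simp only [Finset.mem_insert, Finset.mem_singleton, not_or] at hi
      exact (hex i (by simp [Set.mem_insert_iff, hi.1, hi.2])).1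
    rw [← Finset.sum_subset (Finset.subset_univ ({A1, A2} : Finset ι)) hzero,
      Finset.sum_pair hA12, hW2r, hW1]
    norm_num [hra]
  have hdemand : x A1 r + x A2 r ≤ 2 := by
    have h1 : ∑ i ∈ ({A1, A2} : Finset ι), x i r ≤ ∑ i, x i r :=
      Finset.sum_le_sum_of_subset_of_nonneg (Finset.subset_univ _)
        (fun i _ _ => (hopt i).1 r)
    rw [Finset.sum_pair hA12] at h1
    calc x A1 r + x A2 r ≤ ∑ i, x i r := h1
      _ ≤ ∑ i, W i r := hle r
      _ = 2 := hsupply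
  -- conclude
  set B1 : ℝ := p a + p r with hB1d
  set B2 : ℝ := Q + p r with hB2d
  have hkey : B1 / B2 + B2 / B1 ≤ 2 := by linarith
  have hmul : B1 * B1 + B2 * B2 ≤ 2 * (B2 * B1) := by
    have hpos : 0 ≤ B2 * B1 := le_of_lt (mul_pos hB2pos hB1pos)
    have hh := mul_le_mul_of_nonneg_left hkey hpos
    have e : (B2 * B1) * (B1 / B2 + B2 / B1) = B1 * B1 + B2 * B2 := by
      field_simp
    rw [e] at hh
    linarith
  have hsq : (B1 - B2) * (B1 - B2) ≤ 0 := by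
    have e2 : (B1 - B2) * (B1 - B2) = B1 * B1 + B2 * B2 - 2 * (B2 * B1) := by ring
    linarith
  have h0 : (B1 - B2) * (B1 - B2) = 0 := le_antisymm hsq (mul_self_nonneg _)
  have hne : B1 - B2 = 0 := mul_self_eq_zero.mp h0
  have hfin : p a + p r = Q + p r := by
    rw [hB1d, hB2d] at hne; linarith
  linarith
end

section
/- (Converter device Conv(q).) Let H > 0, q > 0 and 0 ≤ p ≤ H·q. Consider three goods G_1, G_2, G_3 with prices p, q, and H·q − p respectively, and two agents: A_1 with endowment H units of G_2 and Leontief utility min(y_1, y_3); A_2 with endowment one unit of G_3 and utility y_2. Then the maximum budget-constrained utility of A_1 equals 1, attained by consuming exactly one unit each of G_1 and G_3, and the maximum budget-constrained utility of A_2 equals H − p/q, attained by consuming exactly H − p/q units of G_2. With these optimal bundles, good G_3 is exactly cleared within the pair, the pair's net consumption is one unit of G_1 (which neither agent owns), their net leftover endowment is exactly p/q units of G_2, and the value p of the net consumption equals the value q·(p/q) of the net leftover endowment. -/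
open Finset

/-!
Both agents spend their whole budget on what they value. For a utility `U` and a constant
`c > 0` with `c * U y ≤ p · y` for every bundle `y ≥ 0`, an affordable bundle `x` with
`budget ≤ c * U x` is optimal. For `A1` take `c = p + (H q - p) = H q`, the price of one
unit of `G1` together with one unit of `G3`; for `A2` take `c = q`.
-/

section Expenditure

variable {G : Type*} [Fintype G] {pr y : G → ℝ}

theorem IsOptimalBundle.of_expenditure_bound {budget c : ℝ} {U : (G → ℝ) → ℝ} {x : G → ℝ}
    (hc : 0 < c) (hU : ∀ y : G → ℝ, (∀ j, 0 ≤ y j) → c * U y ≤ ∑ j, pr j * y j)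
    (hx : ∀ j, 0 ≤ x j) (hx_budget : ∑ j, pr j * x j ≤ budget) (hUx : budget ≤ c * U x) :
    IsOptimalBundle pr budget U x :=
  ⟨hx, hx_budget, fun y hy hy_budget =>
    le_of_mul_le_mul_left ((hU y hy).trans (hy_budget.trans hUx)) hc⟩

theorem mul_le_expenditure (hpr : ∀ j, 0 ≤ pr j) (hy : ∀ j, 0 ≤ y j) (i : G) :
    pr i * y i ≤ ∑ j, pr j * y j :=
  single_le_sum (fun j _ => mul_nonneg (hpr j) (hy j)) (mem_univ i)

theorem add_mul_min_le_expenditure [DecidableEq G] (hpr : ∀ j, 0 ≤ pr j) (hy : ∀ j, 0 ≤ y j)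
    {i k : G} (hik : i ≠ k) :
    (pr i + pr k) * min (y i) (y k) ≤ ∑ j, pr j * y j :=
  calc (pr i + pr k) * min (y i) (y k)
      = pr i * min (y i) (y k) + pr k * min (y i) (y k) := add_mul _ _ _
    _ ≤ pr i * y i + pr k * y k := by
      gcongr
      exacts [hpr i, min_le_left _ _, hpr k, min_le_right _ _]
    _ = ∑ j ∈ {i, k}, pr j * y j := (sum_pair (f := fun j => pr j * y j) hik).symm
    _ ≤ ∑ j, pr j * y j :=
      sum_le_sum_of_subset_of_nonneg (subset_univ _) fun j _ _ => mul_nonneg (hpr j) (hy j)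

end Expenditure

/-- **Converter device Conv(q).** With goods `G1, G2, G3` at
prices `p`, `q`, `H·q − p`, agent `A1` (endowment `H` units of `G2`, Leontief
utility `min(y1, y3)`) optimally consumes one unit each of `G1` and `G3`
attaining utility `1`, and agent `A2` (endowment one unit of `G3`, utility `y2`)
optimally consumes `H − p/q` units of `G2`; `G3` is exactly cleared within the
pair, the net consumption is one unit of `G1` (owned by neither), the net
leftover endowment is `p/q` units of `G2`, and the values balance. -/
theorem converter_device (H q p : ℝ) (hH : 0 < H) (hq : 0 < q)
    (hp0 : 0 ≤ p) (hpH : p ≤ H * q) :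
    let pr : Fin 3 → ℝ := ![p, q, H * q - p]
    let W1 : Fin 3 → ℝ := ![0, H, 0]
    let W2 : Fin 3 → ℝ := ![0, 0, 1]
    let U1 : (Fin 3 → ℝ) → ℝ := fun y => min (y 0) (y 2)
    let U2 : (Fin 3 → ℝ) → ℝ := fun y => y 1
    let x1 : Fin 3 → ℝ := ![1, 0, 1]
    let x2 : Fin 3 → ℝ := ![0, H - p / q, 0]
    (IsOptimalBundle pr (∑ j, pr j * W1 j) U1 x1 ∧ U1 x1 = 1) ∧
    (IsOptimalBundle pr (∑ j, pr j * W2 j) U2 x2 ∧ U2 x2 = H - p / q) ∧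
    (x1 2 + x2 2 = W1 2 + W2 2) ∧
    (x1 0 + x2 0 = 1 ∧ W1 0 + W2 0 = 0) ∧
    ((W1 1 + W2 1) - (x1 1 + x2 1) = p / q) ∧
    (p * (x1 0 + x2 0) = q * ((W1 1 + W2 1) - (x1 1 + x2 1))) := by
  intro pr W1 W2 U1 U2 x1 x2
  have hpr : ∀ j, 0 ≤ pr j := by
    intro j; fin_cases j <;> simp [pr] <;> linarith
  have hx2 : 0 ≤ H - p / q := sub_nonneg.2 ((div_le_iff₀ hq).2 hpH)
  have hqx2 : q * (H - p / q) = H * q - p := by field_simp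
  refine ⟨⟨?_, by simp [U1, x1]⟩, ⟨?_, by simp [U2, x2]⟩, by simp [x1, x2, W1, W2],
    ⟨by simp [x1, x2], by simp [W1, W2]⟩, by simp [x1, x2, W1, W2], ?_⟩
  · refine .of_expenditure_bound (mul_pos hH hq) (fun y hy => ?_) ?_ ?_ ?_
    · simpa [pr] using add_mul_min_le_expenditure hpr hy (i := 0) (k := 2) (by decide)
    · intro j; fin_cases j <;> simp [x1]
    · simp [pr, x1, W1, Fin.sum_univ_three, mul_comm]
    · simp [pr, x1, U1, W1, Fin.sum_univ_three, mul_comm]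
  · refine .of_expenditure_bound hq (fun y hy => mul_le_expenditure hpr hy 1) ?_ ?_ ?_
    · intro j; fin_cases j <;> simp [x2, hx2]
    · simp [pr, x2, W2, Fin.sum_univ_three, hqx2]
    · simp [pr, x2, U2, W2, Fin.sum_univ_three, hqx2]
  · simp [x1, x2, W1, W2]
    field_simp
end

section
/- (Combiner device Comb(l, p_a, p_b).) Let H > 0, 0 ≤ l ≤ H, and p_a, p_b ≥ 0 with p_a + p_b > 0. Consider five goods G_1, …, G_5 with prices p_a, p_b, p_a + p_b, l·(p_a + p_b), and (H − l)·(p_a + p_b) respectively, and three agents: A_1 with endowment one unit of G_4 and Leontief utility min(y_1, y_2); A_2 with endowment H units of G_3 and Leontief utility min(y_4, y_5); A_3 with endowment one unit of G_5 and utility y_3. Then the maximum budget-constrained utilities of A_1, A_2, A_3 are l, 1, and H − l respectively, attained by A_1 consuming l units each of G_1 and G_2, A_2 consuming one unit each of G_4 and G_5, and A_3 consuming H − l units of G_3. With these optimal bundles, goods G_4 and G_5 are exactly cleared within the triple, the triple's net consumption is l units each of G_1 and G_2 (which none of them owns), their net leftover endowment is exactly l units of G_3, and the value l·(p_a + p_b)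 of the net consumption equals the value of the net leftover endowment. -/
open Finset

/-- **Combiner device Comb(l, p_a, p_b).** With goods
`G1, …, G5` at prices `p_a`, `p_b`, `p_a + p_b`, `l·(p_a + p_b)`,
`(H − l)·(p_a + p_b)`, the three agents of the combiner optimally attain
utilities `l`, `1`, `H − l` at the indicated bundles; `G4` and `G5` are exactly
cleared within the triple, the net consumption is `l` units each of `G1` and
`G2` (owned by none of them), the net leftover endowment is `l` units of `G3`,
and the values balance. -/
theorem combiner_device (H l pa pb : ℝ) (hH : 0 < H) (hl0 : 0 ≤ l) (hlH : l ≤ H)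
    (hpa : 0 ≤ pa) (hpb : 0 ≤ pb) (hpab : 0 < pa + pb) :
    let pr : Fin 5 → ℝ := ![pa, pb, pa + pb, l * (pa + pb), (H - l) * (pa + pb)]
    let W1 : Fin 5 → ℝ := ![0, 0, 0, 1, 0]
    let W2 : Fin 5 → ℝ := ![0, 0, H, 0, 0]
    let W3 : Fin 5 → ℝ := ![0, 0, 0, 0, 1]
    let U1 : (Fin 5 → ℝ) → ℝ := fun y => min (y 0) (y 1)
    let U2 : (Fin 5 → ℝ) → ℝ := fun y => min (y 3) (y 4)
    let U3 : (Fin 5 → ℝ) → ℝ := fun y => y 2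
    let x1 : Fin 5 → ℝ := ![l, l, 0, 0, 0]
    let x2 : Fin 5 → ℝ := ![0, 0, 0, 1, 1]
    let x3 : Fin 5 → ℝ := ![0, 0, H - l, 0, 0]
    (IsOptimalBundle pr (∑ j, pr j * W1 j) U1 x1 ∧ U1 x1 = l) ∧
    (IsOptimalBundle pr (∑ j, pr j * W2 j) U2 x2 ∧ U2 x2 = 1) ∧
    (IsOptimalBundle pr (∑ j, pr j * W3 j) U3 x3 ∧ U3 x3 = H - l) ∧
    (x1 3 + x2 3 + x3 3 = W1 3 + W2 3 + W3 3) ∧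
    (x1 4 + x2 4 + x3 4 = W1 4 + W2 4 + W3 4) ∧
    (x1 0 + x2 0 + x3 0 = l ∧ W1 0 + W2 0 + W3 0 = 0) ∧
    (x1 1 + x2 1 + x3 1 = l ∧ W1 1 + W2 1 + W3 1 = 0) ∧
    ((W1 2 + W2 2 + W3 2) - (x1 2 + x2 2 + x3 2) = l) ∧
    (l * (pa + pb) =
      pa * (x1 0 + x2 0 + x3 0) + pb * (x1 1 + x2 1 + x3 1)) ∧
    (l * (pa + pb) =
      (pa + pb) * ((W1 2 + W2 2 + W3 2) - (x1 2 + x2 2 + x3 2))) := by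

  intro pr W1 W2 W3 U1 U2 U3 x1 x2 x3
  have hHl : 0 ≤ H - l := by linarith
  refine ⟨⟨⟨?_, ?_, ?_⟩, ?_⟩, ⟨⟨?_, ?_, ?_⟩, ?_⟩, ⟨⟨?_, ?_, ?_⟩, ?_⟩, ?_⟩
  · intro j; fin_cases j <;> simp [x1] <;> linarith
  · simp [Fin.sum_univ_five, pr, W1, x1]; ring_nf; nlinarith
  · intro y hy hb
    simp only [Fin.sum_univ_five, pr, W1, Matrix.cons_val_zero, Matrix.cons_val_one,
      Matrix.head_cons, Matrix.cons_val_two, Matrix.tail_cons, Matrix.cons_val_three,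
      Matrix.cons_val_four] at hb
    have h0 := hy 2; have h3 := hy 3; have h4 := hy 4
    have hm0 : min (y 0) (y 1) ≤ y 0 := min_le_left _ _
    have hm1 : min (y 0) (y 1) ≤ y 1 := min_le_right _ _
    have hx : U1 x1 = l := by simp [U1, x1]
    rw [hx]; simp only [U1]
    nlinarith [mul_nonneg hl0 hpab.le, mul_nonneg hHl hpab.le,
      mul_nonneg (mul_nonneg hl0 hpab.le) h3, mul_nonneg (mul_nonneg hHl hpab.le) h4,
      mul_nonneg (add_nonneg hpa hpb) h0, mul_le_mul_of_nonneg_left hm0 hpa,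
      mul_le_mul_of_nonneg_left hm1 hpb]
  · simp [U1, x1]
  · intro j; fin_cases j <;> norm_num [x2]
  · simp [Fin.sum_univ_five, pr, W2, x2]; ring_nf; try rfl
  · intro y hy hb
    simp only [Fin.sum_univ_five, pr, W2, Matrix.cons_val_zero, Matrix.cons_val_one,
      Matrix.head_cons, Matrix.cons_val_two, Matrix.tail_cons, Matrix.cons_val_three,
      Matrix.cons_val_four] at hb
    have h0 := hy 0; have h1 := hy 1; have h2 := hy 2
    have hm0 : min (y 3) (y 4) ≤ y 3 := min_le_left _ _
    have hm1 : min (y 3) (y 4) ≤ y 4 := min_le_right _ _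
    have hx : U2 x2 = 1 := by simp [U2, x2]
    rw [hx]; simp only [U2]
    by_contra hc
    push_neg at hc
    have h3m : 0 ≤ y 3 - (y 3 ⊓ y 4) := by linarith [min_le_left (y 3) (y 4)]
    have h4m : 0 ≤ y 4 - (y 3 ⊓ y 4) := by linarith [min_le_right (y 3) (y 4)]
    nlinarith [mul_nonneg hpa h0, mul_nonneg hpb h1, mul_nonneg (add_nonneg hpa hpb) h2,
      mul_nonneg (mul_nonneg hl0 hpab.le) h3m, mul_nonneg (mul_nonneg hHl hpab.le) h4m,
      mul_pos (mul_pos hH hpab) (by linarith : (0:ℝ) < y 3 ⊓ y 4 - 1)]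
  · simp [U2, x2]
  · intro j; fin_cases j <;> simp [x3] <;> linarith
  · simp [Fin.sum_univ_five, pr, W3, x3]; ring_nf; try rfl
  · intro y hy hb
    simp only [Fin.sum_univ_five, pr, W3, Matrix.cons_val_zero, Matrix.cons_val_one,
      Matrix.head_cons, Matrix.cons_val_two, Matrix.tail_cons, Matrix.cons_val_three,
      Matrix.cons_val_four] at hb
    have h0 := hy 0; have h1 := hy 1; have h3 := hy 3; have h4 := hy 4
    have hx : U3 x3 = H - l := by simp [U3, x3]
    rw [hx]; simp only [U3]
    nlinarith [mul_nonneg hpa h0, mul_nonneg hpb h1,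
      mul_nonneg (mul_nonneg hl0 hpab.le) h3, mul_nonneg (mul_nonneg hHl hpab.le) h4]
  · simp [U3, x3]
  · refine ⟨?_, ?_, ⟨?_, ?_⟩, ⟨?_, ?_⟩, ?_, ?_, ?_⟩ <;>
      simp [x1, x2, x3, W1, W2, W3] <;> ring
end

section
/- (Splitter device Spl(l, p_a, p_b).) Let H > 0, 0 ≤ l ≤ H, and p_a, p_b ≥ 0 with p_a + p_b > 0. Consider five goods G_1, …, G_5 with prices p_a + p_b, p_a, p_b, l·(p_a + p_b), and (H − l)·(p_a + p_b) respectively, and three agents: A_1 with endowment one unit of G_4 and utility y_1; A_2 with endowment H units each of G_2 and G_3 and Leontief utility min(y_4, y_5); A_3 with endowment one unit of G_5 and Leontief utility min(y_2, y_3). Then the maximum budget-constrained utilities of A_1, A_2, A_3 are l, 1, and H − l respectively, attained by A_1 consuming l units of G_1, A_2 consuming one unit each of G_4 and G_5, and A_3 consuming H − l units each of G_2 and G_3. With these optimal bundles, goods G_4 and G_5 are exactly cleared within the triple, the triple's net consumption is l units of G_1 (which none of them owns), their net leftover endowment is exactly l units each of G_2 and G_3, and the value l·(p_a + p_b) of the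 net consumption equals the value of the net leftover endowment. -/
open Finset

/-- **Splitter device Spl(l, p_a, p_b).** With goods `G1, …, G5`
at prices `p_a + p_b`, `p_a`, `p_b`, `l·(p_a + p_b)`, `(H − l)·(p_a + p_b)`,
the three agents of the splitter optimally attain utilities `l`, `1`, `H − l`
at the indicated bundles; `G4` and `G5` are exactly cleared within the triple,
the net consumption is `l` units of `G1` (owned by none of them), the net
leftover endowment is `l` units each of `G2` and `G3`, and the values balance. -/
theorem splitter_device (H l pa pb : ℝ) (hH : 0 < H) (hl0 : 0 ≤ l) (hlH : l ≤ H)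
    (hpa : 0 ≤ pa) (hpb : 0 ≤ pb) (hpab : 0 < pa + pb) :
    let pr : Fin 5 → ℝ := ![pa + pb, pa, pb, l * (pa + pb), (H - l) * (pa + pb)]
    let W1 : Fin 5 → ℝ := ![0, 0, 0, 1, 0]
    let W2 : Fin 5 → ℝ := ![0, H, H, 0, 0]
    let W3 : Fin 5 → ℝ := ![0, 0, 0, 0, 1]
    let U1 : (Fin 5 → ℝ) → ℝ := fun y => y 0
    let U2 : (Fin 5 → ℝ) → ℝ := fun y => min (y 3) (y 4)
    let U3 : (Fin 5 → ℝ) → ℝ := fun y => min (y 1) (y 2)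
    let x1 : Fin 5 → ℝ := ![l, 0, 0, 0, 0]
    let x2 : Fin 5 → ℝ := ![0, 0, 0, 1, 1]
    let x3 : Fin 5 → ℝ := ![0, H - l, H - l, 0, 0]
    (IsOptimalBundle pr (∑ j, pr j * W1 j) U1 x1 ∧ U1 x1 = l) ∧
    (IsOptimalBundle pr (∑ j, pr j * W2 j) U2 x2 ∧ U2 x2 = 1) ∧
    (IsOptimalBundle pr (∑ j, pr j * W3 j) U3 x3 ∧ U3 x3 = H - l) ∧
    (x1 3 + x2 3 + x3 3 = W1 3 + W2 3 + W3 3) ∧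
    (x1 4 + x2 4 + x3 4 = W1 4 + W2 4 + W3 4) ∧
    (x1 0 + x2 0 + x3 0 = l ∧ W1 0 + W2 0 + W3 0 = 0) ∧
    ((W1 1 + W2 1 + W3 1) - (x1 1 + x2 1 + x3 1) = l) ∧
    ((W1 2 + W2 2 + W3 2) - (x1 2 + x2 2 + x3 2) = l) ∧
    (l * (pa + pb) = (pa + pb) * (x1 0 + x2 0 + x3 0)) ∧
    (l * (pa + pb) =
      pa * ((W1 1 + W2 1 + W3 1) - (x1 1 + x2 1 + x3 1)) +
        pb * ((W1 2 + W2 2 + W3 2) - (x1 2 + x2 2 + x3 2))) := by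
  intro pr W1 W2 W3 U1 U2 U3 x1 x2 x3
  have key : ∀ y : Fin 5 → ℝ, ∑ j, pr j * y j =
      (pa + pb) * y 0 + pa * y 1 + pb * y 2 + l * (pa + pb) * y 3 +
        (H - l) * (pa + pb) * y 4 := by
    intro y
    simp [pr, Fin.sum_univ_five]
  have hHl : 0 ≤ H - l := by linarith
  refine ⟨⟨⟨?_, ?_, ?_⟩, ?_⟩, ⟨⟨?_, ?_, ?_⟩, ?_⟩, ⟨⟨?_, ?_, ?_⟩, ?_⟩, ?_, ?_, ⟨?_, ?_⟩, ?_, ?_, ?_, ?_⟩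
  · intro j; fin_cases j <;> simp [x1, hl0]
  · rw [key, key]; simp [x1, W1]; ring_nf; nlinarith
  · intro y hy hb
    rw [key] at hb
    rw [key] at hb
    simp [W1] at hb
    simp only [U1, x1]
    have h0 := hy 0; have h1 := hy 1; have h2 := hy 2; have h3 := hy 3; have h4 := hy 4
    show y 0 ≤ l
    nlinarith [mul_nonneg hpa h1, mul_nonneg hpb h2,
      mul_nonneg (mul_nonneg hl0 hpab.le) h3,
      mul_nonneg (mul_nonneg hHl hpab.le) h4]
  · simp [U1, x1]
  · intro j; fin_cases j <;> norm_num [x2]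
  · rw [key, key]; simp [x2, W2]; nlinarith [sq_nonneg (pa+pb)]
  · intro y hy hb
    rw [key, key] at hb
    simp [W2] at hb
    simp only [U2, x2]
    have h0 := hy 0; have h1 := hy 1; have h2 := hy 2
    have hm3 : min (y 3) (y 4) ≤ y 3 := min_le_left _ _
    have hm4 : min (y 3) (y 4) ≤ y 4 := min_le_right _ _
    show min (y 3) (y 4) ≤ min (1:ℝ) 1
    rw [min_self]
    nlinarith [mul_nonneg hpab.le h0, mul_nonneg hpa h1, mul_nonneg hpb h2,
      mul_nonneg (mul_nonneg hl0 hpab.le) (sub_nonneg.2 hm3),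
      mul_nonneg (mul_nonneg hHl hpab.le) (sub_nonneg.2 hm4), mul_pos hH hpab]
  · simp [U2, x2]
  · intro j; fin_cases j <;> simp [x3, hHl]
  · rw [key, key]; simp [x3, W3]; nlinarith [sq_nonneg (pa+pb)]
  · intro y hy hb
    rw [key, key] at hb
    simp [W3] at hb
    simp only [U3, x3]
    have h0 := hy 0; have h3 := hy 3; have h4 := hy 4
    have hm1 : min (y 1) (y 2) ≤ y 1 := min_le_left _ _
    have hm2 : min (y 1) (y 2) ≤ y 2 := min_le_right _ _
    show min (y 1) (y 2) ≤ min (H - l) (H - l)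
    rw [min_self]
    nlinarith [mul_nonneg hpab.le h0,
      mul_nonneg (mul_nonneg hl0 hpab.le) h3,
      mul_nonneg (mul_nonneg hHl hpab.le) h4,
      mul_nonneg hpa (sub_nonneg.2 hm1), mul_nonneg hpb (sub_nonneg.2 hm2)]
  · simp [U3, x3]
  · simp [x1, x2, x3, W1, W2, W3]
  · simp [x1, x2, x3, W1, W2, W3]
  · simp [x1, x2, x3]
  · simp [x1, x2, x3, W1, W2, W3]
  · simp [x1, x2, x3, W1, W2, W3]
  · simp [x1, x2, x3, W1, W2, W3]
  · simp [x1, x2, x3]; ring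
  · simp [x1, x2, x3, W1, W2, W3]; ring
end

section
/- (Product gadget.) Let H > 0. Consider an exchange market, all of whose agents have Leontief utility functions, containing goods a, b, c, thirteen further distinct goods G_1, …, G_7, h_1, …, h_6, and twelve agents: A_1 with endowment one unit of G_1 and utility y_{G_4}; A_2 with endowment one unit of G_6 and utility y_{G_5}; C_1 with endowment H units of G_2 and utility min(y_{G_1}, y_{h_1}); C_2 with endowment one unit of h_1 and utility y_{G_2}; C_3 with endowment H units of G_7 and utility min(y_{G_6}, y_{h_2}); C_4 with endowment one unit of h_2 and utility y_{G_7}; C_5 with endowment one unit of h_3 and utility min(y_{G_2}, y_{G_7}); C_6 with endowment H units of G_3 and utility min(y_{h_3}, y_{h_4}); C_7 with endowment one unit of h_4 and utility y_{G_3}; C_8 with endowment one unit of h_5 and utility y_{G_3}; C_9 with endowment H units each of G_4 and G_5 and utility min(y_{h_5}, y_{h_6}); and C_10 with endowment one unit of h_6 and utility min(y_{G_4}, y_{G_5}). Assume each of the thirteen goods G_1, …, G_7, h_1, …, h_6 is exclusive to these twelve agents. Suppose (p, (x_i)) is an equilibrium of the whole market whose prices satisfy p_b > 0 and p_{G_1}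 = p_c, p_{G_2} = 1, p_{G_3} = p_b + 1, p_{G_4} = 1, p_{G_5} = p_b, p_{G_6} = p_a, p_{G_7} = p_b, p_{h_1} = H − p_c, p_{h_2} = H·p_b − p_a, p_{h_4} = H·(p_b + 1) − p_{h_3}, and p_{h_6} = H·(p_b + 1) − p_{h_5}. Then p_a = p_b·p_c, and for each of the thirteen goods G_1, …, G_7, h_1, …, h_6 the total consumption (all of it by these twelve agents) equals the total endowment of that good. -/
open Finset

/-!
Each gadget agent spends its whole budget on its Leontief bundle, so at the given prices its
demand is bounded below by budget / bundle price. Writing `r = p a / p b`, `u = p h₃ / (p b + 1)`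
and `v = p h₅ / (p b + 1)`, the five goods `G₂, G₃, G₄, G₅, G₇` each have supply `H` shared by two
agents demanding `H - p c` and `u`, `H - u` and `v`, `p c` and `H - v`, `r` and `H - v`, `H - r`
and `u`; hence `u ≤ p c ≤ v ≤ u` and `u ≤ r ≤ v`, so all four are equal and `p a = p b * p c`.
With these equalities every lower bound adds up to exactly the supply, which forces clearing.
(In the code `Gg k` is `G_{k+1}` and `hh k` is `h_{k+1}`.)
-/

section Demand

variable {G : Type*} [Fintype G] {p x : G → ℝ} {B t : ℝ}

theorem IsOptimalBundle.le_apply_of_mul_le {g : G}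
    (hx : IsOptimalBundle p B (fun y => y g) x) (hcost : p g * t ≤ B) : t ≤ x g := by
  classical
  rcases lt_or_ge t 0 with ht | ht
  · exact ht.le.trans (hx.1 g)
  have hy : (0 : G → ℝ) ≤ Pi.single g t := Pi.single_nonneg.mpr ht
  simpa using hx.2.2 (Pi.single g t) hy (by simpa [Pi.single_apply, mul_ite] using hcost)

theorem IsOptimalBundle.le_apply_and_le_apply_of_add_mul_le {g₁ g₂ : G}
    (hx : IsOptimalBundle p B (fun y => min (y g₁) (y g₂)) x) (hcost : (p g₁ + p g₂) * t ≤ B) :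
    t ≤ x g₁ ∧ t ≤ x g₂ := by
  classical
  rcases lt_or_ge t 0 with ht | ht
  · exact ⟨ht.le.trans (hx.1 g₁), ht.le.trans (hx.1 g₂)⟩
  have h₁ : (0 : G → ℝ) ≤ Pi.single g₁ t := Pi.single_nonneg.mpr ht
  have h₂ : (0 : G → ℝ) ≤ Pi.single g₂ t := Pi.single_nonneg.mpr ht
  have hcost' : ∑ j, p j * (Pi.single g₁ t + Pi.single g₂ t : G → ℝ) j ≤ B := by
    simpa [mul_add, sum_add_distrib, Pi.single_apply, mul_ite, add_mul] using hcost
  have key := hx.2.2 _ (add_nonneg h₁ h₂) hcost'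
  simp only [Pi.add_apply, Pi.single_eq_same] at key
  exact le_min_iff.mp <|
    (le_min (le_add_of_nonneg_right (h₂ g₁)) (le_add_of_nonneg_left (h₁ g₂))).trans key

end Demand

theorem ExclusiveGood.sum_endowment_eq {ι G : Type*} [Fintype ι] {W : ι → G → ℝ}
    {U : ι → (G → ℝ) → ℝ} {r : G} {S : Set ι} (hex : ExclusiveGood W U r S) {o : ι}
    (h : ∀ i ∈ S, i ≠ o → W i r = 0) : ∑ i, W i r = W o r :=
  Fintype.sum_eq_single o fun i hi => (em (i ∈ S)).elim (h i · hi) fun hS => (hex i hS).1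

theorem sum_eq_and_eq_zero_of_le_sum {ι : Type*} [Fintype ι] {f w : ι → ℝ} {s : Finset ι}
    (hf : ∀ i, 0 ≤ f i) (hle : ∑ i, f i ≤ ∑ i, w i) (hs : ∑ i, w i ≤ ∑ i ∈ s, f i) :
    ∑ i, f i = ∑ i, w i ∧ ∀ i ∉ s, f i = 0 := by
  classical
  have hsub : ∑ i ∈ s, f i ≤ ∑ i, f i := sum_le_univ_sum_of_nonneg hf
  have hcompl : ∑ i ∈ sᶜ, f i = 0 := by
    have := sum_compl_add_sum s f
    exact le_antisymm (by linarith) (sum_nonneg fun i _ => hf i)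
  refine ⟨le_antisymm hle (hs.trans hsub), fun i hi => ?_⟩
  exact (sum_eq_zero_iff_of_nonneg fun i _ => hf i).mp hcompl i (mem_compl.mpr hi)

theorem injective_and_ne_of_nodup_append_ofFn {α : Type*} {m n : ℕ} {l : List α}
    {f : Fin m → α} {g : Fin n → α} (h : (l ++ List.ofFn f ++ List.ofFn g).Nodup) :
    Function.Injective f ∧ Function.Injective g ∧ ∀ i j, f i ≠ g j := by
  rw [List.nodup_append, List.nodup_append, List.nodup_ofFn, List.nodup_ofFn] at h
  exact ⟨h.1.2.1, h.2.1, fun i j => h.2.2 _ (List.mem_append_right _ (List.mem_ofFn.mpr ⟨_, rfl⟩))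
    _ (List.mem_ofFn.mpr ⟨_, rfl⟩)⟩

theorem product_gadget_general {ι G : Type*} [Fintype ι] [Fintype G] [DecidableEq G]
    (W : ι → G → ℝ) (U : ι → (G → ℝ) → ℝ)
    (H : ℝ) (a b c : G) (Gg : Fin 7 → G) (hh : Fin 6 → G)
    (hdist : ([a, b, c, Gg 0, Gg 1, Gg 2, Gg 3, Gg 4, Gg 5, Gg 6,
               hh 0, hh 1, hh 2, hh 3, hh 4, hh 5] : List G).Pairwise (· ≠ ·))
    (A1 A2 C1 C2 C3 C4 C5 C6 C7 C8 C9 C10 : ι)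
    (hadist : ([A1, A2, C1, C2, C3, C4, C5, C6, C7, C8, C9, C10] : List ι).Pairwise (· ≠ ·))
    (hWA1 : W A1 = fun j => if j = Gg 0 then 1 else 0)
    (hUA1 : U A1 = fun y => y (Gg 3))
    (hWA2 : W A2 = fun j => if j = Gg 5 then 1 else 0)
    (hUA2 : U A2 = fun y => y (Gg 4))
    (hWC1 : W C1 = fun j => if j = Gg 1 then H else 0)
    (hUC1 : U C1 = fun y => min (y (Gg 0)) (y (hh 0)))
    (hWC2 : W C2 = fun j => if j = hh 0 then 1 else 0)
    (hUC2 : U C2 = fun y => y (Gg 1))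
    (hWC3 : W C3 = fun j => if j = Gg 6 then H else 0)
    (hUC3 : U C3 = fun y => min (y (Gg 5)) (y (hh 1)))
    (hWC4 : W C4 = fun j => if j = hh 1 then 1 else 0)
    (hUC4 : U C4 = fun y => y (Gg 6))
    (hWC5 : W C5 = fun j => if j = hh 2 then 1 else 0)
    (hUC5 : U C5 = fun y => min (y (Gg 1)) (y (Gg 6)))
    (hWC6 : W C6 = fun j => if j = Gg 2 then H else 0)
    (hUC6 : U C6 = fun y => min (y (hh 2)) (y (hh 3)))
    (hWC7 : W C7 = fun j => if j = hh 3 then 1 else 0)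
    (hUC7 : U C7 = fun y => y (Gg 2))
    (hWC8 : W C8 = fun j => if j = hh 4 then 1 else 0)
    (hUC8 : U C8 = fun y => y (Gg 2))
    (hWC9 : W C9 = fun j => if j = Gg 3 then H else if j = Gg 4 then H else 0)
    (hUC9 : U C9 = fun y => min (y (hh 4)) (y (hh 5)))
    (hWC10 : W C10 = fun j => if j = hh 5 then 1 else 0)
    (hUC10 : U C10 = fun y => min (y (Gg 3)) (y (Gg 4)))
    (hexG : ∀ k : Fin 7, ExclusiveGood W U (Gg k)
      ({A1, A2, C1, C2, C3, C4, C5, C6, C7, C8, C9, C10} : Set ι))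
    (hexh : ∀ k : Fin 6, ExclusiveGood W U (hh k)
      ({A1, A2, C1, C2, C3, C4, C5, C6, C7, C8, C9, C10} : Set ι))
    (p : G → ℝ) (x : ι → G → ℝ) (heq : IsEquilibrium W U p x)
    (hpb : 0 < p b)
    (hp1 : p (Gg 0) = p c) (hp2 : p (Gg 1) = 1) (hp3 : p (Gg 2) = p b + 1)
    (hp4 : p (Gg 3) = 1) (hp5 : p (Gg 4) = p b) (hp6 : p (Gg 5) = p a)
    (hp7 : p (Gg 6) = p b)
    (hph1 : p (hh 0) = H - p c) (hph2 : p (hh 1) = H * p b - p a)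
    (hph4 : p (hh 3) = H * (p b + 1) - p (hh 2))
    (hph6 : p (hh 5) = H * (p b + 1) - p (hh 4)) :
    p a = p b * p c ∧
      (∀ k : Fin 7, (∑ i, x i (Gg k) = ∑ i, W i (Gg k)) ∧
        ∀ i, i ∉ ({A1, A2, C1, C2, C3, C4, C5, C6, C7, C8, C9, C10} : Set ι) →
          x i (Gg k) = 0) ∧
      (∀ k : Fin 6, (∑ i, x i (hh k) = ∑ i, W i (hh k)) ∧
        ∀ i, i ∉ ({A1, A2, C1, C2, C3, C4, C5, C6, C7, C8, C9, C10} : Set ι) →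
          x i (hh k) = 0) := by
  
  classical
  set S12 : Set ι := {A1, A2, C1, C2, C3, C4, C5, C6, C7, C8, C9, C10}
  obtain ⟨hp, hopt, hfeas, -⟩ := heq
  have hx (r : G) : ∀ i, 0 ≤ x i r := fun i => (hopt i).1 r
  obtain ⟨hGinj, hhinj, hGh⟩ :=
    injective_and_ne_of_nodup_append_ofFn (l := [a, b, c]) (f := Gg) (g := hh) hdist
  have hC25 : C2 ≠ C5 := hadist.rel_get_of_lt (a := ⟨3, by simp⟩) (b := ⟨6, by simp⟩) (by simp)
  have hC45 : C4 ≠ C5 := hadist.rel_get_of_lt (a := ⟨5, by simp⟩) (b := ⟨6, by simp⟩) (by simp)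
  have hC78 : C7 ≠ C8 := hadist.rel_get_of_lt (a := ⟨8, by simp⟩) (b := ⟨9, by simp⟩) (by simp)
  have hA1C10 : A1 ≠ C10 := hadist.rel_get_of_lt (a := ⟨0, by simp⟩) (b := ⟨11, by simp⟩) (by simp)
  have hA2C10 : A2 ≠ C10 := hadist.rel_get_of_lt (a := ⟨1, by simp⟩) (b := ⟨11, by simp⟩) (by simp)
  obtain ⟨sG0, sG1, sG2, sG3, sG4, sG5, sG6, sh0, sh1, sh2, sh3, sh4, sh5⟩ :
      ∑ i, W i (Gg 0) = 1 ∧ ∑ i, W i (Gg 1) = H ∧ ∑ i, W i (Gg 2) = H ∧ ∑ i, W i (Gg 3) = H ∧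
      ∑ i, W i (Gg 4) = H ∧ ∑ i, W i (Gg 5) = 1 ∧ ∑ i, W i (Gg 6) = H ∧
      ∑ i, W i (hh 0) = 1 ∧ ∑ i, W i (hh 1) = 1 ∧ ∑ i, W i (hh 2) = 1 ∧ ∑ i, W i (hh 3) = 1 ∧
      ∑ i, W i (hh 4) = 1 ∧ ∑ i, W i (hh 5) = 1 := by
    refine ⟨((hexG 0).sum_endowment_eq (o := A1) ?_).trans ?_,
      ((hexG 1).sum_endowment_eq (o := C1) ?_).trans ?_,
      ((hexG 2).sum_endowment_eq (o := C6) ?_).trans ?_,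
      ((hexG 3).sum_endowment_eq (o := C9) ?_).trans ?_,
      ((hexG 4).sum_endowment_eq (o := C9) ?_).trans ?_,
      ((hexG 5).sum_endowment_eq (o := A2) ?_).trans ?_,
      ((hexG 6).sum_endowment_eq (o := C3) ?_).trans ?_,
      ((hexh 0).sum_endowment_eq (o := C2) ?_).trans ?_,
      ((hexh 1).sum_endowment_eq (o := C4) ?_).trans ?_,
      ((hexh 2).sum_endowment_eq (o := C5) ?_).trans ?_,
      ((hexh 3).sum_endowment_eq (o := C7) ?_).trans ?_,
      ((hexh 4).sum_endowment_eq (o := C8) ?_).trans ?_,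
      ((hexh 5).sum_endowment_eq (o := C10) ?_).trans ?_⟩
    all_goals simp only [S12, Set.forall_mem_insert, Set.mem_singleton_iff, forall_eq, hWA1, hWA2,
      hWC1, hWC2, hWC3, hWC4, hWC5, hWC6, hWC7, hWC8, hWC9, hWC10, hGinj.eq_iff, hhinj.eq_iff, hGh,
      (hGh _ _).symm, Fin.reduceEq, if_false, if_true, implies_true, ne_eq,
      not_true_eq_false, false_implies, and_self]
  obtain ⟨r, hr⟩ : ∃ r, p a = p b * r := ⟨p a / p b, by field_simp⟩
  obtain ⟨u, hu⟩ : ∃ u, p (hh 2) = (p b + 1) * u := ⟨p (hh 2) / (p b + 1), by field_simp⟩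
  obtain ⟨v, hv⟩ : ∃ v, p (hh 4) = (p b + 1) * v := ⟨p (hh 4) / (p b + 1), by field_simp⟩
  have dA1 : p c ≤ x A1 (Gg 3) :=
    (hUA1 ▸ hopt A1).le_apply_of_mul_le (by simp [hWA1, hp1, hp4])
  have dA2 : r ≤ x A2 (Gg 4) :=
    (hUA2 ▸ hopt A2).le_apply_of_mul_le (by simp [hWA2, hp5, hp6, hr])
  have dC1 : 1 ≤ x C1 (Gg 0) ∧ 1 ≤ x C1 (hh 0) :=
    (hUC1 ▸ hopt C1).le_apply_and_le_apply_of_add_mul_le (by simp [hWC1, hp1, hp2, hph1])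
  have dC2 : H - p c ≤ x C2 (Gg 1) :=
    (hUC2 ▸ hopt C2).le_apply_of_mul_le (by simp [hWC2, hp2, hph1])
  have dC3 : 1 ≤ x C3 (Gg 5) ∧ 1 ≤ x C3 (hh 1) :=
    (hUC3 ▸ hopt C3).le_apply_and_le_apply_of_add_mul_le (by simp [hWC3, hp6, hp7, hph2]; linarith)
  have dC4 : H - r ≤ x C4 (Gg 6) :=
    (hUC4 ▸ hopt C4).le_apply_of_mul_le (by simp [hWC4, hp7, hph2, hr]; linarith)
  have dC5 : u ≤ x C5 (Gg 1) ∧ u ≤ x C5 (Gg 6) :=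
    (hUC5 ▸ hopt C5).le_apply_and_le_apply_of_add_mul_le (by simp [hWC5, hp2, hp7, hu]; linarith)
  have dC6 : 1 ≤ x C6 (hh 2) ∧ 1 ≤ x C6 (hh 3) :=
    (hUC6 ▸ hopt C6).le_apply_and_le_apply_of_add_mul_le (by simp [hWC6, hp3, hph4]; linarith)
  have dC7 : H - u ≤ x C7 (Gg 2) :=
    (hUC7 ▸ hopt C7).le_apply_of_mul_le (by simp [hWC7, hp3, hph4, hu]; linarith)
  have dC8 : v ≤ x C8 (Gg 2) :=
    (hUC8 ▸ hopt C8).le_apply_of_mul_le (by simp [hWC8, hp3, hv])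
  have budgetC9 : ∑ j, p j * W C9 j = H * (p b + 1) := by
    have h34 : Gg 3 ≠ Gg 4 := hGinj.ne (by decide)
    rw [Fintype.sum_eq_add (Gg 3) (Gg 4) h34 fun j hj => by simp [hWC9, hj.1, hj.2]]
    simp [hWC9, h34.symm, hp4, hp5]
    ring
  have dC9 : 1 ≤ x C9 (hh 4) ∧ 1 ≤ x C9 (hh 5) :=
    (hUC9 ▸ hopt C9).le_apply_and_le_apply_of_add_mul_le (by rw [budgetC9, hph6]; linarith)
  have dC10 : H - v ≤ x C10 (Gg 3) ∧ H - v ≤ x C10 (Gg 4) :=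
    (hUC10 ▸ hopt C10).le_apply_and_le_apply_of_add_mul_le
      (by simp [hWC10, hp4, hp5, hph6, hv]; linarith)
  have pair_le_endowment (r : G) {i j : ι} (hij : i ≠ j) : x i r + x j r ≤ ∑ k, W k r :=
    (add_le_sum (fun k _ => hx r k) (mem_univ i) (mem_univ j) hij).trans
      (hfeas r)
  have capG1 : x C2 (Gg 1) + x C5 (Gg 1) ≤ H := sG1 ▸ pair_le_endowment (Gg 1) hC25
  have capG2 : x C7 (Gg 2) + x C8 (Gg 2) ≤ H := sG2 ▸ pair_le_endowment (Gg 2) hC78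
  have capG3 : x A1 (Gg 3) + x C10 (Gg 3) ≤ H := sG3 ▸ pair_le_endowment (Gg 3) hA1C10
  have capG4 : x A2 (Gg 4) + x C10 (Gg 4) ≤ H := sG4 ▸ pair_le_endowment (Gg 4) hA2C10
  have capG6 : x C4 (Gg 6) + x C5 (Gg 6) ≤ H := sG6 ▸ pair_le_endowment (Gg 6) hC45
  have hu' : u = p c := by linarith
  have hv' : v = p c := by linarith
  have hr' : r = p c := by linarith
  subst hu' hv' hr'
  have clears (r : G) (s : Finset ι) (hs : ↑s ⊆ S12) (hle : ∑ i, W i r ≤ ∑ i ∈ s, x i r) :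
      (∑ i, x i r = ∑ i, W i r) ∧ ∀ i ∉ S12, x i r = 0 :=
    have h := sum_eq_and_eq_zero_of_le_sum (hx r) (hfeas r) hle
    ⟨h.1, fun i hi => h.2 i fun h' => hi (hs h')⟩
  refine ⟨hr, fun k => ?_, fun k => ?_⟩
  · fin_cases k
    · exact clears (Gg 0) {C1} (by simp [S12]) (by simpa [sG0] using dC1.1)
    · exact clears (Gg 1) {C2, C5} (by simp [S12, Set.insert_subset_iff])
        (by simp [sG1, sum_pair hC25]; linarith)
    · exact clears (Gg 2) {C7, C8} (by simp [S12, Set.insert_subset_iff])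
        (by simp [sG2, sum_pair hC78]; linarith)
    · exact clears (Gg 3) {A1, C10} (by simp [S12, Set.insert_subset_iff])
        (by simp [sG3, sum_pair hA1C10]; linarith)
    · exact clears (Gg 4) {A2, C10} (by simp [S12, Set.insert_subset_iff])
        (by simp [sG4, sum_pair hA2C10]; linarith)
    · exact clears (Gg 5) {C3} (by simp [S12]) (by simpa [sG5] using dC3.1)
    · exact clears (Gg 6) {C4, C5} (by simp [S12, Set.insert_subset_iff])
        (by simp [sG6, sum_pair hC45]; linarith)
  · fin_cases k
    · exact clears (hh 0) {C1} (by simp [S12]) (by simpa [sh0] using dC1.2)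
    · exact clears (hh 1) {C3} (by simp [S12]) (by simpa [sh1] using dC3.2)
    · exact clears (hh 2) {C6} (by simp [S12]) (by simpa [sh2] using dC6.1)
    · exact clears (hh 3) {C6} (by simp [S12]) (by simpa [sh3] using dC6.2)
    · exact clears (hh 4) {C9} (by simp [S12]) (by simpa [sh4] using dC9.1)
    · exact clears (hh 5) {C9} (by simp [S12]) (by simpa [sh5] using dC9.2)

/-- **Product gadget.** In an exchange market in which every
agent has a Leontief utility function, containing the twelve-agent product
gadget on goods `a, b, c` and thirteen further exclusive goods
`G_1, …, G_7, h_1, …, h_6` (here `Gg 0, …, Gg 6, hh 0, …, hh 5`), every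
equilibrium whose prices satisfy `p b > 0` and the listed price relations also
satisfies `p a = p b · p c`, and each of the thirteen exclusive goods is exactly
cleared, all of its consumption being by the twelve gadget agents. -/
theorem product_gadget {ι G : Type*} [Fintype ι] [Fintype G] [DecidableEq G]
    (W : ι → G → ℝ) (U : ι → (G → ℝ) → ℝ) (hW : ∀ i j, 0 ≤ W i j)
    (hLeon : ∀ i, ∃ A : G → ℝ, (∀ j, 0 ≤ A j) ∧ A ≠ 0 ∧ U i = leontief A)
    (H : ℝ) (hH : 0 < H)
    (a b c : G) (Gg : Fin 7 → G) (hh : Fin 6 → G)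
    (hdist : ([a, b, c, Gg 0, Gg 1, Gg 2, Gg 3, Gg 4, Gg 5, Gg 6,
               hh 0, hh 1, hh 2, hh 3, hh 4, hh 5] : List G).Pairwise (· ≠ ·))
    (A1 A2 C1 C2 C3 C4 C5 C6 C7 C8 C9 C10 : ι)
    (hadist : ([A1, A2, C1, C2, C3, C4, C5, C6, C7, C8, C9, C10] : List ι).Pairwise (· ≠ ·))
    (hWA1 : W A1 = fun j => if j = Gg 0 then 1 else 0)
    (hUA1 : U A1 = fun y => y (Gg 3))
    (hWA2 : W A2 = fun j => if j = Gg 5 then 1 else 0)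
    (hUA2 : U A2 = fun y => y (Gg 4))
    (hWC1 : W C1 = fun j => if j = Gg 1 then H else 0)
    (hUC1 : U C1 = fun y => min (y (Gg 0)) (y (hh 0)))
    (hWC2 : W C2 = fun j => if j = hh 0 then 1 else 0)
    (hUC2 : U C2 = fun y => y (Gg 1))
    (hWC3 : W C3 = fun j => if j = Gg 6 then H else 0)
    (hUC3 : U C3 = fun y => min (y (Gg 5)) (y (hh 1)))
    (hWC4 : W C4 = fun j => if j = hh 1 then 1 else 0)
    (hUC4 : U C4 = fun y => y (Gg 6))
    (hWC5 : W C5 = fun j => if j = hh 2 then 1 else 0)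
    (hUC5 : U C5 = fun y => min (y (Gg 1)) (y (Gg 6)))
    (hWC6 : W C6 = fun j => if j = Gg 2 then H else 0)
    (hUC6 : U C6 = fun y => min (y (hh 2)) (y (hh 3)))
    (hWC7 : W C7 = fun j => if j = hh 3 then 1 else 0)
    (hUC7 : U C7 = fun y => y (Gg 2))
    (hWC8 : W C8 = fun j => if j = hh 4 then 1 else 0)
    (hUC8 : U C8 = fun y => y (Gg 2))
    (hWC9 : W C9 = fun j => if j = Gg 3 then H else if j = Gg 4 then H else 0)
    (hUC9 : U C9 = fun y => min (y (hh 4)) (y (hh 5)))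
    (hWC10 : W C10 = fun j => if j = hh 5 then 1 else 0)
    (hUC10 : U C10 = fun y => min (y (Gg 3)) (y (Gg 4)))
    (hexG : ∀ k : Fin 7, ExclusiveGood W U (Gg k)
      ({A1, A2, C1, C2, C3, C4, C5, C6, C7, C8, C9, C10} : Set ι))
    (hexh : ∀ k : Fin 6, ExclusiveGood W U (hh k)
      ({A1, A2, C1, C2, C3, C4, C5, C6, C7, C8, C9, C10} : Set ι))
    (p : G → ℝ) (x : ι → G → ℝ) (heq : IsEquilibrium W U p x)
    (hpb : 0 < p b)
    (hp1 : p (Gg 0) = p c) (hp2 : p (Gg 1) = 1) (hp3 : p (Gg 2) = p b + 1)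
    (hp4 : p (Gg 3) = 1) (hp5 : p (Gg 4) = p b) (hp6 : p (Gg 5) = p a)
    (hp7 : p (Gg 6) = p b)
    (hph1 : p (hh 0) = H - p c) (hph2 : p (hh 1) = H * p b - p a)
    (hph4 : p (hh 3) = H * (p b + 1) - p (hh 2))
    (hph6 : p (hh 5) = H * (p b + 1) - p (hh 4)) :
    p a = p b * p c ∧
      (∀ k : Fin 7, (∑ i, x i (Gg k) = ∑ i, W i (Gg k)) ∧
        ∀ i, i ∉ ({A1, A2, C1, C2, C3, C4, C5, C6, C7, C8, C9, C10} : Set ι) →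
          x i (Gg k) = 0) ∧
      (∀ k : Fin 6, (∑ i, x i (hh k) = ∑ i, W i (hh k)) ∧
        ∀ i, i ∉ ({A1, A2, C1, C2, C3, C4, C5, C6, C7, C8, C9, C10} : Set ι) →
          x i (hh k) = 0) :=
  product_gadget_general W U H a b c Gg hh hdist A1 A2 C1 C2 C3 C4 C5 C6 C7 C8 C9 C10 hadist hWA1
    hUA1 hWA2 hUA2 hWC1 hUC1 hWC2 hUC2 hWC3 hUC3 hWC4 hUC4 hWC5 hUC5 hWC6 hUC6 hWC7 hUC7 hWC8 hUC8
    hWC9 hUC9 hWC10 hUC10 hexG hexh p x heq hpb hp1 hp2 hp3 hp4 hp5 hp6 hp7 hph1 hph2 hph4 hph6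
end
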